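/- arXiv:0903.3751 — 12 statements merged into one kernel-verified Lean document; each statement's English description precedes it below -/
import Mathlib

section
/- In G = A ∗_C B, the length of a reduced form is an invariant of the element: if c·g₁⋯gₙ and c'·h₁⋯h_m are two reduced forms representing the same element of G, then n = m. Moreover, an element admitting a reduced form c·g₁⋯gₙ equals the identity of G if and only if n = 0 and c = 1. -/
open Monoid

universe u

/-- The two factors of the amalgam, indexed by `Bool`. -/
def Fac (A B : Type u) : Bool → Type u
  | true => A
  | false => B

instance FacGroup (A B : Type u) [Group A] [Group B] : (b : Bool) → Group (Fac A B b)
  | true => inferInstanceAs (Group A)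
  | false => inferInstanceAs (Group B)

variable {A B C : Type u} [Group A] [Group B] [Group C]

/-- The family of monomorphisms `C → A`, `C → B`. -/
def amalgHom (φ : C →* A) (ψ : C →* B) : (b : Bool) → C →* Fac A B b
  | true => φ
  | false => ψ

variable (φ : C →* A) (ψ : C →* B)

/-- The amalgamated free product `G = A ∗_C B`, i.e. the pushout of `φ` and `ψ`. -/
abbrev Amalg : Type u := Monoid.PushoutI (amalgHom φ ψ)

/-- The factor `A`, identified with its image in `G = A ∗_C B`. -/
def facA : Subgroup (Amalg φ ψ) := (Monoid.PushoutI.of (φ := amalgHom φ ψ) true).range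

/-- The factor `B`, identified with its image in `G = A ∗_C B`. -/
def facB : Subgroup (Amalg φ ψ) := (Monoid.PushoutI.of (φ := amalgHom φ ψ) false).range

/-- The amalgamated subgroup `C`, identified with its image in `G = A ∗_C B`. -/
def amalgC : Subgroup (Amalg φ ψ) := (Monoid.PushoutI.base (amalgHom φ ψ)).range

/-- `c * g₁ ⋯ gₙ` (with the list `L = [g₁, …, gₙ]`) is a reduced form:
`c ∈ C`, each `gᵢ ∈ (A ∪ B) ∖ C`, and consecutive letters lie in different factors. -/
def ReducedForm (c : Amalg φ ψ) (L : List (Amalg φ ψ)) : Prop :=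
  c ∈ amalgC φ ψ ∧
  (∀ x ∈ L, (x ∈ facA φ ψ ∨ x ∈ facB φ ψ) ∧ x ∉ amalgC φ ψ) ∧
  L.Chain' (fun x y => (x ∈ facA φ ψ → y ∈ facB φ ψ) ∧ (x ∈ facB φ ψ → y ∈ facA φ ψ))

/-- A reduced form `c * g₁ ⋯ gₙ` is cyclically reduced if `n = 0`, or `n = 1` and the
element is not conjugate to an element of `C`, or `n ≥ 2` and `g₁`, `gₙ` lie in different
factors. -/
def CyclicallyReducedForm (c : Amalg φ ψ) (L : List (Amalg φ ψ)) : Prop :=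
  ReducedForm φ ψ c L ∧
  (L.length = 0 ∨
    (L.length = 1 ∧ ∀ x : Amalg φ ψ, x⁻¹ * (c * L.prod) * x ∉ amalgC φ ψ) ∨
    (2 ≤ L.length ∧ ∀ x y : Amalg φ ψ, x ∈ L.head? → y ∈ L.getLast? →
      ((x ∈ facA φ ψ → y ∈ facB φ ψ) ∧ (x ∈ facB φ ψ → y ∈ facA φ ψ))))

/-- An element of `G = A ∗_C B` is cyclically reduced if it has a cyclically reduced
reduced form. -/
def CyclicallyReduced (g : Amalg φ ψ) : Prop :=
  ∃ (c : Amalg φ ψ) (L : List (Amalg φ ψ)), g = c * L.prod ∧ CyclicallyReducedForm φ ψ c L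

/-!
Fix a transversal of `C` in each factor. Mathlib's normal form theorem for pushouts says that
every element of `A ∗_C B` is the product of a unique normal word: an element of `C` followed by
alternating transversal letters. Pushing the letters of a reduced form `c·g₁⋯gₙ` one at a time,
from the right, into a normal word turns each `gᵢ` into exactly one transversal letter (the
`C`-part is absorbed into the head), so the normal word of the element has exactly `n` letters.
Uniqueness of the normal word then makes `n` an invariant, and the identity has the reduced
form `1` of length `0`.
-/

section NormalForm

open Function PushoutI PushoutI.NormalWord

variable {φ ψ}

theorem amalgHom_injective (hφ : Injective φ) (hψ : Injective ψ) :
    ∀ b, Injective (amalgHom φ ψ b)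
  | true => hφ
  | false => hψ

theorem mem_amalgC_of_mem_range_of_mem_range_not (hinj : ∀ b, Injective (amalgHom φ ψ b))
    {b : Bool} {x : Amalg φ ψ} (hx : x ∈ (of b).range) (hx' : x ∈ (of !b).range) :
    x ∈ amalgC φ ψ := by
  rw [amalgC, ← inf_of_range_eq_base_range hinj (Bool.not_ne_self b).symm]
  exact ⟨hx, hx'⟩

theorem notMem_range_amalgHom_of_of_notMem_amalgC {b : Bool} {a : Fac A B b}
    (ha : of b a ∉ amalgC φ ψ) : a ∉ (amalgHom φ ψ b).range := by
  rintro ⟨t, rfl⟩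
  exact ha ⟨t, (of_apply_eq_base _ b t).symm⟩

theorem mem_range_not_of_alternate {b : Bool} {x y : Amalg φ ψ} (hx : x ∈ (of b).range)
    (hxy : (x ∈ facA φ ψ → y ∈ facB φ ψ) ∧ (x ∈ facB φ ψ → y ∈ facA φ ψ)) :
    y ∈ (of !b).range := by
  cases b
  exacts [hxy.2 hx, hxy.1 hx]

variable (φ ψ) in
/-- `ReducedForm φ ψ c L` unfolds to `c ∈ amalgC φ ψ ∧ ReducedWord φ ψ L`. -/
def ReducedWord (L : List (Amalg φ ψ)) : Prop :=
  (∀ x ∈ L, (x ∈ facA φ ψ ∨ x ∈ facB φ ψ) ∧ x ∉ amalgC φ ψ) ∧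
  L.IsChain (fun x y => (x ∈ facA φ ψ → y ∈ facB φ ψ) ∧ (x ∈ facB φ ψ → y ∈ facA φ ψ))

theorem ReducedWord.tail {x : Amalg φ ψ} {L : List (Amalg φ ψ)} (h : ReducedWord φ ψ (x :: L)) :
    ReducedWord φ ψ L :=
  ⟨fun y hy => h.1 y (List.mem_cons_of_mem x hy), h.2.tail⟩

/-- The extra conclusion on `fstIdx` is the invariant that lets the induction go through: the
next letter pushed in lies in the other factor, hence is not absorbed. -/
theorem exists_normalWord_prod_eq_of_reducedWord (hinj : ∀ b, Injective (amalgHom φ ψ b))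
    (d : Transversal (amalgHom φ ψ)) {L : List (Amalg φ ψ)} (hL : ReducedWord φ ψ L) :
    ∃ w : NormalWord d, w.prod = L.prod ∧ w.toList.length = L.length ∧
      ∀ b, w.fstIdx = some b → ∃ x ∈ L.head?, x ∈ (of b).range := by
  induction L with
  | nil => exact ⟨empty, prod_empty, rfl, fun b hb => by cases hb⟩
  | cons x L ih =>
    obtain ⟨w, hprod, hlen, hfst⟩ := ih hL.tail
    obtain ⟨hxAB, hxC⟩ := hL.1 x List.mem_cons_self
    obtain ⟨b, a, rfl⟩ : ∃ b, ∃ a : Fac A B b, of b a = x := by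
      rcases hxAB with ⟨a, rfl⟩ | ⟨a, rfl⟩
      exacts [⟨true, a, rfl⟩, ⟨false, a, rfl⟩]
    have hw : w.fstIdx ≠ some b := by
      intro hb
      obtain ⟨y, hy, hyb⟩ := hfst b hb
      have hyb' := mem_range_not_of_alternate ⟨a, rfl⟩ (hL.2.rel_head? hy)
      exact (hL.1 y (List.mem_cons_of_mem _ (List.mem_of_mem_head? hy))).2
        (mem_amalgC_of_mem_range_of_mem_range_not hinj hyb hyb')
    refine ⟨cons a w hw (notMem_range_amalgHom_of_of_notMem_amalgC hxC), ?_, ?_, ?_⟩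
    · rw [prod_cons, hprod, List.prod_cons]
    · simp [cons, CoprodI.Word.cons, hlen]
    · rintro b' hb'
      obtain rfl : b' = b := by simpa [cons, CoprodI.Word.cons, CoprodI.Word.fstIdx] using hb'.symm
      exact ⟨_, rfl, a, rfl⟩

theorem exists_normalWord_prod_eq_of_reducedForm (hinj : ∀ b, Injective (amalgHom φ ψ b))
    (d : Transversal (amalgHom φ ψ)) {c : Amalg φ ψ} {L : List (Amalg φ ψ)}
    (h : ReducedForm φ ψ c L) :
    ∃ w : NormalWord d, w.prod = c * L.prod ∧ w.toList.length = L.length := by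
  obtain ⟨w, hprod, hlen, -⟩ := exists_normalWord_prod_eq_of_reducedWord hinj d h.2
  obtain ⟨t, rfl⟩ := h.1
  exact ⟨t • w, by rw [prod_base_smul, hprod], hlen⟩

theorem ReducedForm.length_eq_of_mul_prod_eq (hφ : Injective φ) (hψ : Injective ψ)
    {c c' : Amalg φ ψ} {L L' : List (Amalg φ ψ)}
    (h : ReducedForm φ ψ c L) (h' : ReducedForm φ ψ c' L')
    (heq : c * L.prod = c' * L'.prod) : L.length = L'.length := by
  have hinj := amalgHom_injective hφ hψ
  obtain ⟨d⟩ := transversal_nonempty (amalgHom φ ψ) hinj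
  obtain ⟨w, hw, hlen⟩ := exists_normalWord_prod_eq_of_reducedForm hinj d h
  obtain ⟨w', hw', hlen'⟩ := exists_normalWord_prod_eq_of_reducedForm hinj d h'
  obtain rfl : w = w' := prod_injective (by rw [hw, hw', heq])
  rw [← hlen, ← hlen']

theorem reducedForm_one_nil : ReducedForm φ ψ 1 [] :=
  ⟨one_mem _, by simp, List.isChain_nil⟩

end NormalForm

/-- In `G = A ∗_C B` the length of a reduced form is an invariant of the element,
and an element with reduced form `c·g₁⋯gₙ` is trivial iff `n = 0` and `c = 1`. -/
theorem reducedForm_length_unique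
    (hφ : Function.Injective φ) (hψ : Function.Injective ψ)
    (c c' : Amalg φ ψ) (L L' : List (Amalg φ ψ))
    (h : ReducedForm φ ψ c L) (h' : ReducedForm φ ψ c' L')
    (heq : c * L.prod = c' * L'.prod) :
    L.length = L'.length ∧
    (∀ (c₀ : Amalg φ ψ) (L₀ : List (Amalg φ ψ)), ReducedForm φ ψ c₀ L₀ →
      (c₀ * L₀.prod = 1 ↔ (L₀ = [] ∧ c₀ = 1))) := by
  refine ⟨h.length_eq_of_mul_prod_eq hφ hψ h' heq, fun c₀ L₀ h₀ => ⟨fun h1 => ?_, ?_⟩⟩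
  · obtain rfl : L₀ = [] := List.length_eq_zero_iff.mp <|
      h₀.length_eq_of_mul_prod_eq hφ hψ reducedForm_one_nil (by rw [h1, List.prod_nil, mul_one])
    simpa using h1
  · rintro ⟨rfl, rfl⟩
    simp
end

section
/- Let g ∈ C and c ∈ C be conjugate in G = A ∗_C B. Then there exists a finite sequence c = c₀, c₁, …, c_t = g of elements of C such that for each i = 0, …, t−1 the elements c_i and c_{i+1} are conjugate in A or conjugate in B (i.e. there exists x ∈ A with x⁻¹c_i x = c_{i+1}, or x ∈ B with x⁻¹c_i x = c_{i+1}). -/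
/-! Write the conjugator as `x = h g₁ ⋯ gₙ` with `h ∈ C` and `g₁ ⋯ gₙ` a reduced word. If `u` lies
in a factor but not in `C`, and the reduced word `w` does not start in that factor, then `w⁻¹ u w`
is spelled by the nonempty reduced word `w⁻¹ · u · w`, so by the normal form theorem it is not in
`C`. Hence if `x⁻¹ c x ∈ C`, already `g₁⁻¹ (h⁻¹ c h) g₁ ∈ C`, and peeling off one letter at a time
yields the chain of conjugations inside single factors. -/

open Monoid

universe u

variable {A B C : Type u} [Group A] [Group B] [Group C]

variable (φ : C →* A) (ψ : C →* B)

theorem Relation.ReflTransGen.exists_seq {α : Type*} {r : α → α → Prop} {a b : α}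
    (h : Relation.ReflTransGen r a b) :
    ∃ (t : ℕ) (f : ℕ → α), f 0 = a ∧ f t = b ∧ ∀ i < t, r (f i) (f (i + 1)) := by
  induction h using Relation.ReflTransGen.head_induction_on with
  | refl => exact ⟨0, fun _ => b, rfl, rfl, by simp⟩
  | @head a c hac _ ih =>
    obtain ⟨t, f, rfl, rfl, hf⟩ := ih
    refine ⟨t + 1, fun n => Nat.casesOn n a f, rfl, rfl, ?_⟩
    rintro (_ | i) hi
    · exact hac
    · exact hf i (by omega)

namespace Monoid.CoprodI.Word

variable {ι : Type*} {G : ι → Type*} [∀ i, Group (G i)]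

def inv (w : Word G) : Word G where
  toList := (w.toList.map fun l => ⟨l.1, l.2⁻¹⟩).reverse
  ne_one := by
    simp only [List.mem_reverse, List.forall_mem_map]
    exact fun l hl => inv_ne_one.2 (w.ne_one l hl)
  chain_ne := by
    rw [List.isChain_reverse, List.isChain_map]
    exact w.chain_ne.imp fun _ _ h => Ne.symm h

theorem prod_inv (w : Word G) : w.inv.prod = w.prod⁻¹ := by
  simp [inv, prod, List.prod_inv_reverse, Function.comp_def]

def append (v w : Word G)
    (h : ∀ a ∈ v.toList.getLast?, ∀ b ∈ w.toList.head?, a.1 ≠ b.1) : Word G where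
  toList := v.toList ++ w.toList
  ne_one := by simpa [or_imp, forall_and] using ⟨v.ne_one, w.ne_one⟩
  chain_ne := List.isChain_append.2 ⟨v.chain_ne, w.chain_ne, h⟩

theorem prod_append (v w : Word G)
    (h : ∀ a ∈ v.toList.getLast?, ∀ b ∈ w.toList.head?, a.1 ≠ b.1) :
    (v.append w h).prod = v.prod * w.prod := by
  simp [append, prod]

end Monoid.CoprodI.Word

namespace Monoid.PushoutI

open CoprodI Relation

variable {ι : Type*} {G : ι → Type*} [∀ i, Group (G i)] {H : Type*} [Group H]
  {φ : ∀ i, H →* G i}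

theorem Reduced.inv {w : Word G} (hw : Reduced φ w) : Reduced φ w.inv := by
  simp only [Reduced, Word.inv, List.mem_reverse, List.forall_mem_map, inv_mem_iff]
  exact hw

theorem Reduced.append {v w : Word G} (hv : Reduced φ v) (hw : Reduced φ w)
    (h : ∀ a ∈ v.toList.getLast?, ∀ b ∈ w.toList.head?, a.1 ≠ b.1) :
    Reduced φ (v.append w h) := by
  simp only [Reduced, Word.append, List.mem_append, or_imp, forall_and]
  exact ⟨hv, hw⟩

theorem reduced_cons_iff {i : ι} {g : G i} {w : Word G} (hgw : w.fstIdx ≠ some i)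
    (hg1 : g ≠ 1) :
    Reduced φ (Word.cons g w hgw hg1) ↔ g ∉ (φ i).range ∧ Reduced φ w := by
  simp [Reduced, Word.cons]

theorem NormalWord.reduced {d : Transversal φ} (w : NormalWord d) : Reduced φ w.toWord := by
  rintro ⟨i, g⟩ hg hgφ
  have h₁ := (d.compl i).equiv_fst_eq_self_of_mem_of_one_mem (d.one_mem i) hgφ
  have h₂ := (d.compl i).equiv_fst_eq_one_of_mem_of_one_mem (one_mem _) (w.normalized i g hg)
  exact w.ne_one _ hg (congrArg Subtype.val (h₁.symm.trans h₂))

theorem exists_reduced_eq_base_mul (hφ : ∀ i, Function.Injective (φ i)) (x : PushoutI φ) :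
    ∃ (h : H) (w : Word G), Reduced φ w ∧ base φ h * ofCoprodI w.prod = x := by
  classical
  obtain ⟨d⟩ := NormalWord.transversal_nonempty φ hφ
  let n : NormalWord d := x • .empty
  exact ⟨n.head, n.toWord, n.reduced, (NormalWord.prod_smul x _).trans (by simp)⟩

theorem Reduced.inv_mul_of_mul_notMem_range (hφ : ∀ i, Function.Injective (φ i))
    {w : Word G} (hw : Reduced φ w) {i : ι} (hiw : w.fstIdx ≠ some i) {u : G i}
    (hu : u ∉ (φ i).range) :
    (ofCoprodI w.prod)⁻¹ * of i u * ofCoprodI w.prod ∉ (base φ).range := by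
  have hu1 : u ≠ 1 := fun h => hu (h ▸ one_mem _)
  have hlink : ∀ a ∈ w.inv.toList.getLast?, ∀ b ∈ (Word.cons u w hiw hu1).toList.head?,
      a.1 ≠ b.1 := by
    simp only [Word.inv, List.getLast?_reverse, List.head?_map, Word.cons_toList,
      List.head?_cons, Option.mem_def, Option.map_eq_some_iff, Option.some.injEq]
    rintro _ ⟨l, hl, rfl⟩ _ rfl
    exact (Word.fstIdx_ne_iff.1 hiw l hl).symm
  intro hmem
  have := (hw.inv.append ((reduced_cons_iff _ _).2 ⟨hu, hw⟩) hlink).eq_empty_of_mem_range hφ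
    (by simpa [Word.prod_append, Word.prod_inv, mul_assoc] using hmem)
  simpa [Word.append] using congrArg Word.toList this

def FactorConj (a b : PushoutI φ) : Prop :=
  a ∈ (base φ).range ∧ b ∈ (base φ).range ∧ ∃ i, ∃ x ∈ (of (φ := φ) i).range, x⁻¹ * a * x = b

theorem Reduced.reflTransGen_factorConj (hφ : ∀ i, Function.Injective (φ i)) {w : Word G}
    (hw : Reduced φ w) (c : H)
    (hc : (ofCoprodI w.prod)⁻¹ * base φ c * ofCoprodI w.prod ∈ (base φ).range) :
    ReflTransGen FactorConj ((ofCoprodI w.prod)⁻¹ * base φ c * ofCoprodI w.prod) (base φ c) := by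
  induction w using Word.consRecOn generalizing c with
  | empty => simpa [Word.prod_empty] using ReflTransGen.refl
  | cons i g w hiw hg1 ih =>
    replace hw := ((reduced_cons_iff hiw hg1).1 hw).2
    have hconj : (ofCoprodI (Word.cons g w hiw hg1).prod)⁻¹ * base φ c *
        ofCoprodI (Word.cons g w hiw hg1).prod =
        (ofCoprodI w.prod)⁻¹ * of i (g⁻¹ * φ i c * g) * ofCoprodI w.prod := by
      simp [Word.prod_cons, ← of_apply_eq_base φ i, mul_assoc]
    rw [hconj] at hc ⊢
    obtain ⟨c', hc'⟩ : g⁻¹ * φ i c * g ∈ (φ i).range := by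
      by_contra hu
      exact hw.inv_mul_of_mul_notMem_range hφ hiw hu hc
    rw [← hc', of_apply_eq_base] at hc ⊢
    refine (ih hw c' hc).tail ⟨⟨c', rfl⟩, ⟨c, rfl⟩, i, (of i g)⁻¹, inv_mem ⟨g, rfl⟩, ?_⟩
    rw [← of_apply_eq_base φ i, hc']
    simp [mul_assoc, of_apply_eq_base]

theorem reflTransGen_factorConj [Nonempty ι] (hφ : ∀ i, Function.Injective (φ i))
    (x : PushoutI φ) (c : H) (hc : x⁻¹ * base φ c * x ∈ (base φ).range) :
    ReflTransGen FactorConj (x⁻¹ * base φ c * x) (base φ c) := by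
  obtain ⟨h, w, hw, rfl⟩ := exists_reduced_eq_base_mul hφ x
  have hconj : (base φ h * ofCoprodI w.prod)⁻¹ * base φ c * (base φ h * ofCoprodI w.prod) =
      (ofCoprodI w.prod)⁻¹ * base φ (h⁻¹ * c * h) * ofCoprodI w.prod := by
    simp [mul_assoc]
  rw [hconj] at hc ⊢
  obtain ⟨i⟩ := ‹Nonempty ι›
  refine (hw.reflTransGen_factorConj hφ _ hc).tail ⟨⟨_, rfl⟩, ⟨c, rfl⟩, i, (base φ h)⁻¹, ?_, ?_⟩
  · exact inv_mem ⟨φ i h, of_apply_eq_base φ i h⟩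
  · simp [mul_assoc]

end Monoid.PushoutI

/-- Conjugacy criterion, length 0 case: if `g, c ∈ C` are conjugate in `G = A ∗_C B` then
there is a finite chain `c = c₀, c₁, …, c_t = g` in `C` with adjacent terms conjugate
in `A` or in `B`. -/
theorem conj_in_C_chain
    (hφ : Function.Injective φ) (hψ : Function.Injective ψ)
    (g c : Amalg φ ψ) (hg : g ∈ amalgC φ ψ) (hc : c ∈ amalgC φ ψ)
    (hconj : ∃ x : Amalg φ ψ, x⁻¹ * g * x = c) :
    ∃ (t : ℕ) (f : ℕ → Amalg φ ψ), f 0 = c ∧ f t = g ∧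
      (∀ i ≤ t, f i ∈ amalgC φ ψ) ∧
      (∀ i < t, (∃ x ∈ facA φ ψ, x⁻¹ * f i * x = f (i + 1)) ∨
                (∃ x ∈ facB φ ψ, x⁻¹ * f i * x = f (i + 1))) := by
  obtain ⟨x, rfl⟩ := hconj
  obtain ⟨c₀, rfl⟩ := hg
  have hinj : ∀ b, Function.Injective (amalgHom φ ψ b) := Bool.forall_bool.2 ⟨hψ, hφ⟩
  obtain ⟨t, f, h0, ht, hf⟩ := (Monoid.PushoutI.reflTransGen_factorConj hinj x c₀ hc).exists_seq
  refine ⟨t, f, h0, ht, fun i hi => ?_, fun i hi => ?_⟩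
  · rcases hi.lt_or_eq with hi | rfl
    · exact (hf i hi).1
    · exact ht ▸ ⟨c₀, rfl⟩
  · obtain ⟨-, -, b, y, hy, hstep⟩ := hf i hi
    cases b
    · exact Or.inr ⟨y, hy, hstep⟩
    · exact Or.inl ⟨y, hy, hstep⟩
end

section
/- Let g ∈ (A ∪ B) ∖ C be an element of G = A ∗_C B such that no conjugate of g in G lies in C. If g' ∈ G is a cyclically reduced element conjugate to g in G, then g' lies in the same factor as g (g' ∈ A ∖ C if g ∈ A, resp. g' ∈ B ∖ C if g ∈ B), and g and g' are conjugate by an element of that factor. -/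
open Monoid

universe u

variable {A B C : Type u} [Group A] [Group B] [Group C]

variable (φ : C →* A) (ψ : C →* B)

/-! Write the conjugator as `x = c x₁ ⋯ xₙ` in reduced form and absorb the leading letters that lie
in the factor of `g` into `c`: then `g' = M⁻¹ h M` with `h = a⁻¹ g a` a letter of that factor and
`M` reduced, not starting in it. If `M` were nonempty, `M⁻¹ h M` would be a reduced word of length
`2|M| + 1 ≥ 3` whose first and last letters lie in the same factor. By the normal form theorem
for amalgams, all reduced forms of an element run through the same sequence of factors, so this
contradicts `g'` being cyclically reduced. Hence `M = []` and `g' = h`. -/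

theorem Monoid.PushoutI.NormalWord.reduced_s2 {ι H : Type*} {G : ι → Type*} [∀ i, Group (G i)]
    [Group H] {φ : ∀ i, H →* G i} {d : NormalWord.Transversal φ} (w : NormalWord d) :
    Reduced φ w.toWord := by
  rintro ⟨i, g⟩ hg hφg
  have hself := (d.compl i).equiv_snd_eq_self_of_mem_of_one_mem (one_mem _) (w.normalized i g hg)
  have hone := (d.compl i).equiv_snd_eq_one_of_mem_of_one_mem (d.one_mem i) hφg
  exact w.ne_one _ hg (congrArg Subtype.val (hself.symm.trans hone))

namespace Amalg

open Monoid PushoutI Function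

variable {φ ψ}

variable (φ ψ) in
def fac (b : Bool) : Subgroup (Amalg φ ψ) := (of (φ := amalgHom φ ψ) b).range

-- The factor (`true` for `A`) containing a letter; meaningless outside `A ∪ B`.
open scoped Classical in
noncomputable def factor (x : Amalg φ ψ) : Bool := decide (x ∈ facA φ ψ)

def IsLetter (x : Amalg φ ψ) : Prop := (x ∈ facA φ ψ ∨ x ∈ facB φ ψ) ∧ x ∉ amalgC φ ψ

def IsReduced (L : List (Amalg φ ψ)) : Prop :=
  (∀ x ∈ L, IsLetter x) ∧ (L.map factor).IsChain (· ≠ ·)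

theorem amalgC_le_fac (b : Bool) : amalgC φ ψ ≤ fac φ ψ b := by
  rintro _ ⟨c, rfl⟩
  exact ⟨amalgHom φ ψ b c, of_apply_eq_base _ b c⟩

theorem fac_inf_fac_not (hinj : ∀ i, Injective (amalgHom φ ψ i)) (b : Bool) :
    fac φ ψ b ⊓ fac φ ψ (!b) = amalgC φ ψ :=
  inf_of_range_eq_base_range hinj (by cases b <;> decide)

theorem mem_fac_factor {x : Amalg φ ψ} (hx : x ∈ facA φ ψ ∨ x ∈ facB φ ψ) :
    x ∈ fac φ ψ (factor x) := by
  classical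
  by_cases hA : x ∈ facA φ ψ
  · rwa [factor, decide_eq_true hA]
  · rw [factor, decide_eq_false hA]
    exact hx.resolve_left hA

theorem factor_inv (x : Amalg φ ψ) : factor x⁻¹ = factor x := by
  simp [factor]

theorem isLetter_of_mem_fac {x : Amalg φ ψ} {b : Bool} (hb : x ∈ fac φ ψ b)
    (hC : x ∉ amalgC φ ψ) : IsLetter x := by
  cases b
  · exact ⟨Or.inr hb, hC⟩
  · exact ⟨Or.inl hb, hC⟩

theorem IsLetter.inv {x : Amalg φ ψ} (hx : IsLetter x) : IsLetter x⁻¹ := by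
  simpa [IsLetter, inv_mem_iff] using hx

theorem IsLetter.mem_fac_iff (hinj : ∀ i, Injective (amalgHom φ ψ i)) {x : Amalg φ ψ}
    (hx : IsLetter x) {b : Bool} : x ∈ fac φ ψ b ↔ factor x = b := by
  refine ⟨fun hb => ?_, fun h => h ▸ mem_fac_factor hx.1⟩
  by_contra hne
  rw [Bool.eq_not_of_ne (Ne.symm hne)] at hb
  exact hx.2 (fac_inf_fac_not hinj _ ▸ ⟨mem_fac_factor hx.1, hb⟩)

theorem alternate_iff_factor_ne (hinj : ∀ i, Injective (amalgHom φ ψ i)) {x y : Amalg φ ψ}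
    (hx : IsLetter x) (hy : IsLetter y) :
    ((x ∈ facA φ ψ → y ∈ facB φ ψ) ∧ (x ∈ facB φ ψ → y ∈ facA φ ψ)) ↔ factor x ≠ factor y := by
  change (x ∈ fac φ ψ true → y ∈ fac φ ψ false) ∧ (x ∈ fac φ ψ false → y ∈ fac φ ψ true) ↔ _
  simp only [hx.mem_fac_iff hinj, hy.mem_fac_iff hinj]
  cases factor x <;> cases factor y <;> simp

theorem reducedForm_iff (hinj : ∀ i, Injective (amalgHom φ ψ i)) {c : Amalg φ ψ}
    {L : List (Amalg φ ψ)} : ReducedForm φ ψ c L ↔ c ∈ amalgC φ ψ ∧ IsReduced L := by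
  refine and_congr_right fun _ => and_congr_right fun hL => ?_
  rw [List.isChain_map]
  exact List.IsChain.iff_of_mem_imp fun x y hx hy => alternate_iff_factor_ne hinj (hL x hx) (hL y hy)

theorem IsReduced.tail {x : Amalg φ ψ} {L : List (Amalg φ ψ)} (hL : IsReduced (x :: L)) :
    IsReduced L :=
  ⟨fun y hy => hL.1 y (List.mem_cons_of_mem x hy), hL.2.tail⟩

variable (φ ψ) in
def ofSigma (p : Σ b, Fac A B b) : Amalg φ ψ := of (φ := amalgHom φ ψ) p.1 p.2

theorem prod_map_ofSigma (w : CoprodI.Word (Fac A B)) :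
    (w.toList.map (ofSigma φ ψ)).prod = ofCoprodI w.prod := by
  simp only [CoprodI.Word.prod, map_list_prod, List.map_map, comp_def, ofCoprodI_of]
  rfl

theorem isLetter_ofSigma (hinj : ∀ i, Injective (amalgHom φ ψ i)) {p : Σ b, Fac A B b}
    (hp : p.2 ∉ (amalgHom φ ψ p.1).range) : IsLetter (ofSigma φ ψ p) := by
  refine isLetter_of_mem_fac ⟨p.2, rfl⟩ ?_
  rintro ⟨c, hc⟩
  exact hp ⟨c, of_injective hinj p.1 ((of_apply_eq_base _ _ c).trans hc)⟩

theorem factor_ofSigma (hinj : ∀ i, Injective (amalgHom φ ψ i)) {p : Σ b, Fac A B b}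
    (hp : p.2 ∉ (amalgHom φ ψ p.1).range) : factor (ofSigma φ ψ p) = p.1 :=
  ((isLetter_ofSigma hinj hp).mem_fac_iff hinj).1 ⟨p.2, rfl⟩

theorem map_factor_map_ofSigma (hinj : ∀ i, Injective (amalgHom φ ψ i))
    {w : CoprodI.Word (Fac A B)} (hw : Reduced (amalgHom φ ψ) w) :
    (w.toList.map (ofSigma φ ψ)).map factor = w.toList.map Sigma.fst := by
  rw [List.map_map]
  exact List.map_congr_left fun p hp => factor_ofSigma hinj (hw p hp)

theorem isReduced_map_ofSigma (hinj : ∀ i, Injective (amalgHom φ ψ i))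
    {w : CoprodI.Word (Fac A B)} (hw : Reduced (amalgHom φ ψ) w) :
    IsReduced (w.toList.map (ofSigma φ ψ)) := by
  refine ⟨?_, ?_⟩
  · simp only [List.mem_map]
    rintro _ ⟨p, hp, rfl⟩
    exact isLetter_ofSigma hinj (hw p hp)
  · rw [map_factor_map_ofSigma hinj hw, List.isChain_map]
    exact w.chain_ne

noncomputable def toSigma (x : Amalg φ ψ) : Σ b, Fac A B b :=
  ⟨factor x, invFun (of (φ := amalgHom φ ψ) (factor x)) x⟩

theorem ofSigma_toSigma {x : Amalg φ ψ} (hx : x ∈ facA φ ψ ∨ x ∈ facB φ ψ) :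
    ofSigma φ ψ (toSigma x) = x :=
  invFun_eq (mem_fac_factor hx)

theorem exists_word_of_isReduced {L : List (Amalg φ ψ)} (hL : IsReduced L) :
    ∃ w : CoprodI.Word (Fac A B), Reduced (amalgHom φ ψ) w ∧ w.toList.map (ofSigma φ ψ) = L := by
  have hof : ∀ x ∈ L, ofSigma φ ψ (toSigma x) = x := fun x hx => ofSigma_toSigma (hL.1 x hx).1
  have hnotC : ∀ x ∈ L, (toSigma x).2 ∉ (amalgHom φ ψ (toSigma x).1).range := by
    rintro x hx ⟨c, hc⟩
    refine (hL.1 x hx).2 ⟨c, ?_⟩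
    rw [← of_apply_eq_base _ (toSigma x).1, hc]
    exact hof x hx
  refine ⟨⟨L.map toSigma, ?_, ?_⟩, ?_, ?_⟩
  · simp only [List.mem_map]
    rintro _ ⟨x, hx, rfl⟩ h1
    exact hnotC x hx (h1 ▸ one_mem _)
  · rw [List.isChain_map]
    exact (List.isChain_map _).1 hL.2
  · simp only [Reduced, List.mem_map]
    rintro _ ⟨x, hx, rfl⟩
    exact hnotC x hx
  · rw [List.map_map]
    exact (List.map_congr_left hof).trans (List.map_id L)

theorem exists_reducedForm (hinj : ∀ i, Injective (amalgHom φ ψ i)) (x : Amalg φ ψ) :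
    ∃ c L, c ∈ amalgC φ ψ ∧ IsReduced L ∧ x = c * L.prod := by
  classical
  obtain ⟨d⟩ := NormalWord.transversal_nonempty (amalgHom φ ψ) hinj
  let n : NormalWord d := x • NormalWord.empty
  refine ⟨base _ n.head, n.toList.map (ofSigma φ ψ), ⟨n.head, rfl⟩,
    isReduced_map_ofSigma hinj n.reduced_s2, ?_⟩
  rw [prod_map_ofSigma]
  calc x = n.prod := by simp [n, NormalWord.prod_smul]
    _ = _ := rfl

-- Both sides are normal words up to their heads in `C`, and normal words are unique.
theorem map_factor_eq_of_mul_prod_eq (hinj : ∀ i, Injective (amalgHom φ ψ i))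
    {c₁ c₂ : Amalg φ ψ} {L₁ L₂ : List (Amalg φ ψ)} (hc₁ : c₁ ∈ amalgC φ ψ)
    (hc₂ : c₂ ∈ amalgC φ ψ) (hL₁ : IsReduced L₁) (hL₂ : IsReduced L₂)
    (h : c₁ * L₁.prod = c₂ * L₂.prod) : L₁.map factor = L₂.map factor := by
  obtain ⟨d⟩ := NormalWord.transversal_nonempty (amalgHom φ ψ) hinj
  obtain ⟨w₁, hw₁, rfl⟩ := exists_word_of_isReduced hL₁
  obtain ⟨w₂, hw₂, rfl⟩ := exists_word_of_isReduced hL₂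
  obtain ⟨n₁, hn₁, hidx₁⟩ := hw₁.exists_normalWord_prod_eq d
  obtain ⟨n₂, hn₂, hidx₂⟩ := hw₂.exists_normalWord_prod_eq d
  obtain ⟨h₁, rfl⟩ := hc₁
  obtain ⟨h₂, rfl⟩ := hc₂
  have hn : h₁ • n₁ = h₂ • n₂ := NormalWord.prod_injective <| by
    rw [NormalWord.prod_base_smul, NormalWord.prod_base_smul, hn₁, hn₂, ← prod_map_ofSigma,
      ← prod_map_ofSigma, h]
  rw [map_factor_map_ofSigma hinj hw₁, map_factor_map_ofSigma hinj hw₂, ← hidx₁, ← hidx₂]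
  change (h₁ • n₁).toList.map Sigma.fst = (h₂ • n₂).toList.map Sigma.fst
  exact congrArg (fun n : NormalWord d => n.toList.map Sigma.fst) hn

theorem exists_mul_prod_eq_mul_prod {b : Bool} {a₀ : Amalg φ ψ} (ha₀ : a₀ ∈ fac φ ψ b)
    {L : List (Amalg φ ψ)} (hL : IsReduced L) :
    ∃ a ∈ fac φ ψ b, ∃ M, IsReduced M ∧ (∀ y ∈ M.head?, y ∉ fac φ ψ b) ∧
      a₀ * L.prod = a * M.prod := by
  induction L generalizing a₀ with
  | nil => exact ⟨a₀, ha₀, [], hL, by simp, rfl⟩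
  | cons x T ih =>
    by_cases hx : x ∈ fac φ ψ b
    · obtain ⟨a, ha, M, hM, hhead, heq⟩ := ih (mul_mem ha₀ hx) hL.tail
      exact ⟨a, ha, M, hM, hhead, by rw [List.prod_cons, ← mul_assoc, heq]⟩
    · exact ⟨a₀, ha₀, x :: T, hL, by simpa using hx, rfl⟩

theorem isReduced_conj {M : List (Amalg φ ψ)} {h : Amalg φ ψ} (hM : IsReduced M)
    (hh : IsLetter h) (hhead : ∀ y ∈ M.head?, factor y ≠ factor h) :
    IsReduced ((M.map (·⁻¹)).reverse ++ h :: M) := by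
  refine ⟨?_, ?_⟩
  · simp only [List.mem_append, List.mem_reverse, List.mem_map, List.mem_cons]
    rintro x (⟨y, hy, rfl⟩ | rfl | hx)
    · exact (hM.1 y hy).inv
    · exact hh
    · exact hM.1 x hx
  · have hne : ∀ y ∈ (M.map factor).head?, y ≠ factor h := by
      simpa [List.head?_map] using hhead
    rw [List.map_append, List.map_reverse, List.map_map, List.map_cons]
    simp only [Function.comp_def, factor_inv]
    refine List.isChain_append.2 ⟨?_, List.isChain_cons.2 ⟨fun y hy => (hne y hy).symm, hM.2⟩, ?_⟩
    · exact List.isChain_reverse.2 (hM.2.imp fun _ _ h => Ne.symm h)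
    · rintro y hy z hz
      obtain rfl : factor h = z := by simpa using hz
      rw [List.getLast?_reverse] at hy
      exact hne y hy

theorem prod_conj (M : List (Amalg φ ψ)) (h : Amalg φ ψ) :
    ((M.map (·⁻¹)).reverse ++ h :: M).prod = M.prod⁻¹ * h * M.prod := by
  rw [List.prod_append, List.prod_cons, ← List.prod_inv_reverse, mul_assoc]

theorem not_cyclicallyReduced_conj (hinj : ∀ i, Injective (amalgHom φ ψ i))
    {M : List (Amalg φ ψ)} {h : Amalg φ ψ} (hM : IsReduced M) (hne : M ≠ []) (hh : IsLetter h)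
    (hhead : ∀ y ∈ M.head?, factor y ≠ factor h) :
    ¬ CyclicallyReduced φ ψ (M.prod⁻¹ * h * M.prod) := by
  rintro ⟨c, L, hcL, hred, hshape⟩
  obtain ⟨hc, hL⟩ := (reducedForm_iff hinj).1 hred
  have hfac : ((M.map (·⁻¹)).reverse ++ h :: M).map factor = L.map factor :=
    map_factor_eq_of_mul_prod_eq hinj (one_mem _) hc (isReduced_conj hM hh hhead) hL
      (by rw [one_mul, prod_conj, hcL])
  have hlen : 3 ≤ L.length := by
    have hW := congrArg List.length hfac
    simp only [List.length_map, List.length_append, List.length_reverse, List.length_cons] at hW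
    have := List.length_pos_of_ne_nil hne
    omega
  obtain ⟨M', m, rfl⟩ : ∃ M' m, M = M' ++ [m] :=
    ⟨M.dropLast, M.getLast hne, (List.dropLast_append_getLast hne).symm⟩
  have hends : (L.map factor).head? = (L.map factor).getLast? := by
    rw [← hfac]
    simp [List.getLast?_append, List.getLast?_cons, factor_inv]
  have hL0 : L ≠ [] := List.ne_nil_of_length_pos (by omega)
  rcases hshape with h0 | ⟨h1, -⟩ | ⟨-, halt⟩
  · omega
  · omega
  · have hx := List.head?_eq_some_head hL0
    have hy := List.getLast?_eq_some_getLast hL0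
    have hdiff := (alternate_iff_factor_ne hinj (hL.1 _ (List.head_mem hL0))
      (hL.1 _ (List.getLast_mem hL0))).1 (halt _ _ hx hy)
    rw [List.head?_map, List.getLast?_map, hx, hy] at hends
    exact hdiff (Option.some.inj hends)

theorem conj_mem_fac_of_cyclicallyReduced (hinj : ∀ i, Injective (amalgHom φ ψ i)) {b : Bool}
    {g g' x : Amalg φ ψ} (hg : g ∈ fac φ ψ b) (hno : ∀ y : Amalg φ ψ, y⁻¹ * g * y ∉ amalgC φ ψ)
    (hcr : CyclicallyReduced φ ψ g') (hx : x⁻¹ * g * x = g') :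
    g' ∈ fac φ ψ b ∧ g' ∉ amalgC φ ψ ∧ ∃ a ∈ fac φ ψ b, a⁻¹ * g * a = g' := by
  obtain ⟨c, L, hc, hL, rfl⟩ := exists_reducedForm hinj x
  obtain ⟨a, ha, M, hM, hhead, hcL⟩ := exists_mul_prod_eq_mul_prod (amalgC_le_fac b hc) hL
  have hmem : a⁻¹ * g * a ∈ fac φ ψ b := mul_mem (mul_mem (inv_mem ha) hg) ha
  have hg' : g' = M.prod⁻¹ * (a⁻¹ * g * a) * M.prod := by
    rw [← hx, hcL]
    group
  by_cases hne : M = []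
  · subst hne
    obtain rfl : g' = a⁻¹ * g * a := by simpa using hg'
    exact ⟨hmem, hno a, a, ha, rfl⟩
  · have hh := isLetter_of_mem_fac hmem (hno a)
    refine absurd (hg' ▸ hcr) (not_cyclicallyReduced_conj hinj hM hne hh fun y hy hfy => ?_)
    rw [(hh.mem_fac_iff hinj).1 hmem] at hfy
    exact hhead y hy (hfy ▸ mem_fac_factor (hM.1 y (List.mem_of_mem_head? hy)).1)

end Amalg

theorem conj_length_one
    (hφ : Function.Injective φ) (hψ : Function.Injective ψ)
    (g g' : Amalg φ ψ)
    (hnoconj : ∀ x : Amalg φ ψ, x⁻¹ * g * x ∉ amalgC φ ψ)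
    (hcr : CyclicallyReduced φ ψ g')
    (hconj : ∃ x : Amalg φ ψ, x⁻¹ * g * x = g') :
    (g ∈ facA φ ψ → g' ∈ facA φ ψ ∧ g' ∉ amalgC φ ψ ∧
      ∃ a ∈ facA φ ψ, a⁻¹ * g * a = g') ∧
    (g ∈ facB φ ψ → g' ∈ facB φ ψ ∧ g' ∉ amalgC φ ψ ∧
      ∃ b ∈ facB φ ψ, b⁻¹ * g * b = g') := by
  have hinj : ∀ i, Function.Injective (amalgHom φ ψ i) := Bool.forall_bool.2 ⟨hψ, hφ⟩
  obtain ⟨x, hx⟩ := hconj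
  exact ⟨fun hg => Amalg.conj_mem_fac_of_cyclicallyReduced hinj hg hnoconj hcr hx,
    fun hg => Amalg.conj_mem_fac_of_cyclicallyReduced hinj hg hnoconj hcr hx⟩
end

section
/- Let g ∈ G = A ∗_C B have a reduced form g = c₀·p₁⋯p_k with k ≥ 1, and let c ∈ C satisfy g c g⁻¹ ∈ C. Then for every i ∈ {1, …, k} the element (p_i p_{i+1}⋯p_k) c (p_i p_{i+1}⋯p_k)⁻¹ lies in C. Moreover, if c ≠ 1, then for every i one has C ∩ p_i⁻¹ C p_i ≠ {1} (each syllable p_i lies in the generalized normalizer of C in its factor), and there exists q ∈ (A ∪ B) ∖ C with q c q⁻¹ ∈ C. -/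
open Monoid

universe u

variable {A B C : Type u} [Group A] [Group B] [Group C]

variable (φ : C →* A) (ψ : C →* B)

/-!
Let `g = p₁ ⋯ pₖ` be reduced, with `g c g⁻¹ ∈ C`. If a suffix `p_{j+1} ⋯ pₖ` conjugates `c` to
`c' ∈ C` but `y = p_j c' p_j⁻¹ ∉ C`, then `y` is a letter of the factor of `p_j`, so
`p₁ ⋯ p_{j-1} · y · p_{j-1}⁻¹ ⋯ p₁⁻¹` is a nonempty reduced word and hence, by the normal form
theorem, not in `C`; but it equals `g c g⁻¹`. Peeling letters off from the right, every suffix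
therefore conjugates `c` into `C`, and the remaining claims are read off from consecutive
suffixes.
-/

open PushoutI

theorem List.IsChain.append_cons_reverse {α : Type*} {R : α → α → Prop} [Std.Symm R]
    {l : List α} {a : α} (h : (l ++ [a]).IsChain R) : (l ++ a :: l.reverse).IsChain R := by
  rw [← List.singleton_append, ← List.append_assoc]
  obtain ⟨hl, -, hlast⟩ := List.isChain_append.1 h
  refine h.append (List.isChain_reverse.2 (hl.imp fun _ _ => symm)) ?_
  simp only [List.getLast?_append, List.getLast?_singleton, Option.some_or, Option.mem_def,
    Option.some.injEq, List.head?_reverse, forall_eq']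
  exact fun y hy => symm (hlast y hy a rfl)

namespace Amalg

def letter (s : Σ b, Fac A B b) : Amalg φ ψ := PushoutI.of s.1 s.2

def wordInv (l : List (Σ b, Fac A B b)) : List (Σ b, Fac A B b) :=
  (l.map fun s => ⟨s.1, s.2⁻¹⟩).reverse

/-- The list of a `CoprodI.Word` that is `PushoutI.Reduced`. -/
def IsReducedWord (l : List (Σ b, Fac A B b)) : Prop :=
  (l.map Sigma.fst).IsChain (· ≠ ·) ∧ ∀ s ∈ l, s.2 ∉ (amalgHom φ ψ s.1).range

variable {φ ψ}

theorem amalgHom_injective (hφ : Function.Injective φ)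
    (hψ : Function.Injective ψ) (b : Bool) : Function.Injective (amalgHom φ ψ b) := by
  cases b
  exacts [hψ, hφ]

theorem facA_inf_facB (hφ : Function.Injective φ)
    (hψ : Function.Injective ψ) : facA φ ψ ⊓ facB φ ψ = amalgC φ ψ :=
  inf_of_range_eq_base_range (amalgHom_injective hφ hψ) (by decide)

theorem letter_mem_amalgC {s : Σ b, Fac A B b} (hs : s.2 ∈ (amalgHom φ ψ s.1).range) :
    letter φ ψ s ∈ amalgC φ ψ := by
  obtain ⟨c, hc⟩ := hs
  exact ⟨c, by rw [letter, ← hc, of_apply_eq_base]⟩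

theorem prod_map_letter_wordInv (l : List (Σ b, Fac A B b)) :
    ((wordInv l).map (letter φ ψ)).prod = ((l.map (letter φ ψ)).prod)⁻¹ := by
  simp [wordInv, letter, List.prod_inv_reverse, Function.comp_def]

theorem IsReducedWord.prod_notMem (hφ : Function.Injective φ) (hψ : Function.Injective ψ)
    {l : List (Σ b, Fac A B b)} (hl : IsReducedWord φ ψ l) (hne : l ≠ []) :
    (l.map (letter φ ψ)).prod ∉ amalgC φ ψ := by
  intro hmem
  let w : CoprodI.Word (Fac A B) :=
    ⟨l, fun s hs h1 => hl.2 s hs ⟨1, by rw [map_one, h1]⟩, List.isChain_map _ |>.1 hl.1⟩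
  have hw : ofCoprodI w.prod = (l.map (letter φ ψ)).prod := by
    simp only [w, CoprodI.Word.prod, map_list_prod, List.map_map, Function.comp_def, ofCoprodI_of]
    rfl
  exact hne (congrArg CoprodI.Word.toList
    (Reduced.eq_empty_of_mem_range (amalgHom_injective hφ hψ) (w := w) hl.2 (hw ▸ hmem)))

theorem IsReducedWord.append_cons_wordInv {l : List (Σ b, Fac A B b)} {s : Σ b, Fac A B b}
    (hl : IsReducedWord φ ψ (l ++ [s])) : IsReducedWord φ ψ (l ++ s :: wordInv l) := by
  refine ⟨?_, ?_⟩
  · simpa [wordInv, Function.comp_def] using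
      List.IsChain.append_cons_reverse (by simpa using hl.1)
  · intro t ht
    rcases List.mem_append.1 ht with ht | ht
    · exact hl.2 t (List.mem_append_left _ ht)
    rcases List.mem_cons.1 ht with rfl | ht
    · exact hl.2 t (by simp)
    obtain ⟨u, hu, rfl⟩ : ∃ u ∈ l, ⟨u.1, u.2⁻¹⟩ = t := by
      simpa only [wordInv, List.mem_reverse, List.mem_map] using ht
    exact fun hinv => hl.2 u (by simp [hu]) (by simpa using inv_mem hinv)

theorem IsReducedWord.left_of_append {l₁ l₂ : List (Σ b, Fac A B b)}
    (hl : IsReducedWord φ ψ (l₁ ++ l₂)) : IsReducedWord φ ψ l₁ :=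
  ⟨(List.map_append ▸ hl.1).left_of_append, fun s hs => hl.2 s (List.mem_append_left _ hs)⟩

theorem IsReducedWord.letter_conj_mem (hφ : Function.Injective φ) (hψ : Function.Injective ψ)
    {l : List (Σ b, Fac A B b)} {s : Σ b, Fac A B b} (hl : IsReducedWord φ ψ (l ++ [s]))
    {c : Amalg φ ψ} (hc : c ∈ amalgC φ ψ)
    (hconj : ((l ++ [s]).map (letter φ ψ)).prod * c * ((l ++ [s]).map (letter φ ψ)).prod⁻¹ ∈
      amalgC φ ψ) :
    letter φ ψ s * c * (letter φ ψ s)⁻¹ ∈ amalgC φ ψ := by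
  by_contra hy
  obtain ⟨c, rfl⟩ := hc
  let t : Σ b, Fac A B b := ⟨s.1, s.2 * amalgHom φ ψ s.1 c * s.2⁻¹⟩
  have ht : letter φ ψ t = letter φ ψ s * base _ c * (letter φ ψ s)⁻¹ := by
    simp [t, letter, of_apply_eq_base]
  have hred : IsReducedWord φ ψ (l ++ [t]) := by
    refine ⟨by simpa [t] using hl.1, ?_⟩
    simp only [List.mem_append, List.mem_singleton]
    rintro u (hu | rfl)
    · exact hl.2 u (by simp [hu])
    · exact fun h => hy (ht ▸ letter_mem_amalgC h)
  refine hred.append_cons_wordInv.prod_notMem hφ hψ (by simp) ?_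
  convert hconj using 1
  simp [prod_map_letter_wordInv, ht, mul_assoc]

theorem IsReducedWord.conj_mem_of_suffix (hφ : Function.Injective φ) (hψ : Function.Injective ψ)
    {l N : List (Σ b, Fac A B b)} (hl : IsReducedWord φ ψ l) (hN : N <:+ l)
    {c : Amalg φ ψ} (hc : c ∈ amalgC φ ψ)
    (hconj : (l.map (letter φ ψ)).prod * c * (l.map (letter φ ψ)).prod⁻¹ ∈ amalgC φ ψ) :
    (N.map (letter φ ψ)).prod * c * (N.map (letter φ ψ)).prod⁻¹ ∈ amalgC φ ψ := by
  obtain ⟨M, rfl⟩ := hN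
  induction N using List.reverseRecOn generalizing c with
  | nil => simpa using hc
  | append_singleton N s ih =>
    rw [← List.append_assoc] at hl hconj
    have hs := hl.letter_conj_mem hφ hψ hc hconj
    have := ih hs hl.left_of_append (by simpa [mul_assoc] using hconj)
    simpa [mul_assoc] using this

theorem fst_ne_of_alternating (hφ : Function.Injective φ) (hψ : Function.Injective ψ)
    {s t : Σ b, Fac A B b}
    (hA : letter φ ψ s ∈ facA φ ψ → letter φ ψ t ∈ facB φ ψ)
    (hB : letter φ ψ s ∈ facB φ ψ → letter φ ψ t ∈ facA φ ψ)
    (ht : letter φ ψ t ∉ amalgC φ ψ) : s.1 ≠ t.1 := by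
  obtain ⟨b, a⟩ := s
  obtain ⟨b', a'⟩ := t
  rintro (rfl : b = b')
  rw [← facA_inf_facB hφ hψ] at ht
  cases b
  · exact ht ⟨hB ⟨a, rfl⟩, ⟨a', rfl⟩⟩
  · exact ht ⟨⟨a', rfl⟩, hA ⟨a, rfl⟩⟩

theorem exists_isReducedWord (hφ : Function.Injective φ) (hψ : Function.Injective ψ)
    {L : List (Amalg φ ψ)} (hmem : ∀ x ∈ L, (x ∈ facA φ ψ ∨ x ∈ facB φ ψ) ∧ x ∉ amalgC φ ψ)
    (hchain : L.IsChain fun x y => (x ∈ facA φ ψ → y ∈ facB φ ψ) ∧ (x ∈ facB φ ψ → y ∈ facA φ ψ)) :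
    ∃ l, IsReducedWord φ ψ l ∧ l.map (letter φ ψ) = L := by
  induction L with
  | nil => exact ⟨[], ⟨List.isChain_nil, by simp⟩, rfl⟩
  | cons x L ih =>
    obtain ⟨l, hl, rfl⟩ := ih (fun y hy => hmem y (.tail _ hy)) hchain.tail
    obtain ⟨hx, hxC⟩ := hmem x List.mem_cons_self
    obtain ⟨s, rfl⟩ : ∃ s, letter φ ψ s = x := by
      rcases hx with ⟨a, rfl⟩ | ⟨a, rfl⟩
      exacts [⟨⟨true, a⟩, rfl⟩, ⟨⟨false, a⟩, rfl⟩]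
    refine ⟨s :: l, ⟨?_, ?_⟩, rfl⟩
    · refine List.isChain_cons.2 ⟨?_, hl.1⟩
      cases l with
      | nil => simp
      | cons t l =>
        simp only [List.map_cons, List.head?_cons, Option.mem_def, Option.some.injEq, forall_eq']
        have hst := (List.isChain_cons_cons.1 hchain).1
        exact fst_ne_of_alternating hφ hψ hst.1 hst.2 (hmem _ (by simp)).2
    · intro t ht
      rcases List.mem_cons.1 ht with rfl | ht
      · exact fun h => hxC (letter_mem_amalgC h)
      · exact hl.2 t ht

end Amalg

/-- If `g = c₀·p₁⋯p_k` is a reduced form (`k ≥ 1`) and `c ∈ C` with `g c g⁻¹ ∈ C`, then every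
suffix `p_i⋯p_k` conjugates `c` into `C`; moreover if `c ≠ 1` then every syllable `p_i`
satisfies `C ∩ p_i⁻¹ C p_i ≠ {1}` and some `q ∈ (A ∪ B) ∖ C` conjugates `c` into `C`. -/
theorem bad_pair_system
    (hφ : Function.Injective φ) (hψ : Function.Injective ψ)
    (c₀ c : Amalg φ ψ) (L : List (Amalg φ ψ))
    (hL : ReducedForm φ ψ c₀ L) (hk : 1 ≤ L.length)
    (hc : c ∈ amalgC φ ψ)
    (hbad : (c₀ * L.prod) * c * (c₀ * L.prod)⁻¹ ∈ amalgC φ ψ) :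
    (∀ i < L.length, (L.drop i).prod * c * ((L.drop i).prod)⁻¹ ∈ amalgC φ ψ) ∧
    (c ≠ 1 →
      (∀ p ∈ L, ∃ d : Amalg φ ψ, d ∈ amalgC φ ψ ∧ d ≠ 1 ∧ p * d * p⁻¹ ∈ amalgC φ ψ) ∧
      (∃ q : Amalg φ ψ, (q ∈ facA φ ψ ∨ q ∈ facB φ ψ) ∧ q ∉ amalgC φ ψ ∧
        q * c * q⁻¹ ∈ amalgC φ ψ)) := by
  obtain ⟨hc₀, hmem, hchain⟩ := hL
  obtain ⟨l, hl, rfl⟩ := Amalg.exists_isReducedWord hφ hψ hmem hchain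
  have hconj : (l.map (Amalg.letter φ ψ)).prod * c * (l.map (Amalg.letter φ ψ)).prod⁻¹ ∈
      amalgC φ ψ := by
    convert mul_mem (mul_mem (inv_mem hc₀) hbad) hc₀ using 1
    group
  have hsuffix := fun {N} (hN : N <:+ l) => hl.conj_mem_of_suffix hφ hψ hN hc hconj
  refine ⟨fun i _ => by simpa only [List.map_drop] using hsuffix (l.drop_suffix i),
    fun hc1 => ⟨?_, ?_⟩⟩
  · intro p hp
    obtain ⟨s, hs, rfl⟩ := List.mem_map.1 hp
    obtain ⟨M, N, rfl⟩ := List.append_of_mem hs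
    refine ⟨_, hsuffix (N := N) ⟨M ++ [s], by simp⟩, fun h => hc1 (conj_eq_one_iff.1 h), ?_⟩
    simpa [mul_assoc] using hsuffix ⟨M, rfl⟩
  · obtain ⟨M, s, rfl⟩ := l.eq_nil_or_concat'.resolve_left (by rintro rfl; simp at hk)
    obtain ⟨hq, hqC⟩ := hmem (Amalg.letter φ ψ s) (by simp)
    exact ⟨_, hq, hqC, by simpa using hsuffix ⟨M, rfl⟩⟩
end

section
/- In G = A ∗_C B the following holds: for every c ∈ C with c ≠ 1, there exists g ∈ G ∖ C with g⁻¹ c g ∈ C if and only if there exists q ∈ (A ∪ B) ∖ C with q⁻¹ c q ∈ C. Equivalently, Z_G(C) = Z_A(C) ∪ Z_B(C), where for a group K containing C as a subgroup, Z_K(C) denotes the union over all x ∈ K ∖ C with C ∩ x⁻¹Cx ≠ {1} of the sets {h ∈ C : x⁻¹ h x ∈ C}. -/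
open Monoid

universe u

variable {A B C : Type u} [Group A] [Group B] [Group C]

variable (φ : C →* A) (ψ : C →* B)

/-!
Write `g ∉ C` in reduced form `g = h g₁ ⋯ gₙ` with `h ∈ C` and `n ≥ 1`, and let `q = h g₁`,
an element of `A` or `B` outside `C`. If `q⁻¹ c q` were not in `C`, it would be a letter of the same
factor as `g₁`, so `(g₂ ⋯ gₙ)⁻¹ (q⁻¹ c q) (g₂ ⋯ gₙ)` would be a nonempty reduced word and hence,
by the normal form theorem, not in `C`; but this element is `g⁻¹ c g`. The argument works verbatim
for pushouts of arbitrary families of injective homomorphisms.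
-/

namespace Monoid.CoprodI.Word

variable {ι : Type*} {G : ι → Type*} [∀ i, Group (G i)]

def conjOf (w : Word G) {i : ι} (a : G i) (ha : a ≠ 1) (hw : w.fstIdx ≠ some i) : Word G where
  toList := (w.toList.map fun l => ⟨l.1, l.2⁻¹⟩).reverse ++ (cons a w hw ha).toList
  ne_one := by
    simp only [List.mem_append, List.mem_reverse, List.mem_map]
    rintro _ (⟨l, hl, rfl⟩ | hl)
    · exact inv_ne_one.2 (w.ne_one l hl)
    · exact (cons a w hw ha).ne_one _ hl
  chain_ne := by
    refine List.isChain_append.2 ⟨?_, (cons a w hw ha).chain_ne, ?_⟩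
    · rw [List.isChain_reverse, List.isChain_map]
      exact w.chain_ne.imp fun _ _ h => Ne.symm h
    · intro x hx y hy
      simp only [List.getLast?_reverse, List.head?_map, Option.mem_def, Option.map_eq_some_iff,
        cons_toList, List.head?_cons, Option.some.injEq] at hx hy
      obtain ⟨l, hl, rfl⟩ := hx
      subst hy
      exact (fstIdx_ne_iff.1 hw l hl).symm

theorem prod_conjOf (w : Word G) {i : ι} (a : G i) (ha : a ≠ 1) (hw : w.fstIdx ≠ some i) :
    (w.conjOf a ha hw).prod = w.prod⁻¹ * of a * w.prod := by
  simp [conjOf, prod, List.prod_inv_reverse, List.map_reverse, mul_assoc, Function.comp_def]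

end Monoid.CoprodI.Word

theorem Subgroup.IsComplement.eq_one_of_mem_of_mem {G : Type*} [Group G] {S T : Set G}
    (hST : Subgroup.IsComplement S T) (hS : 1 ∈ S) (hT : 1 ∈ T) {g : G} (hgS : g ∈ S)
    (hgT : g ∈ T) : g = 1 := by
  have := hST.1 (a₁ := (⟨g, hgS⟩, ⟨1, hT⟩)) (a₂ := (⟨1, hS⟩, ⟨g, hgT⟩)) (by simp)
  exact congrArg (fun p => (p.1 : G)) this

namespace Monoid.PushoutI

open CoprodI

variable {ι : Type*} {G : ι → Type*} [∀ i, Group (G i)] {H : Type*} [Group H]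
  {φ : ∀ i, H →* G i}

theorem of_mem_base_range_iff (hφ : ∀ i, Function.Injective (φ i)) {i : ι} {x : G i} :
    of (φ := φ) i x ∈ (base φ).range ↔ x ∈ (φ i).range := by
  constructor
  · rintro ⟨y, hy⟩
    rw [← of_apply_eq_base φ i y] at hy
    exact ⟨y, of_injective hφ i hy⟩
  · rintro ⟨y, rfl⟩
    exact ⟨y, (of_apply_eq_base φ i y).symm⟩

theorem exists_base_mul_reduced_eq (hφ : ∀ i, Function.Injective (φ i)) (g : PushoutI φ) :
    ∃ (h : H) (w : Word G), Reduced φ w ∧ base φ h * ofCoprodI w.prod = g := by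
  classical
  obtain ⟨d⟩ := NormalWord.transversal_nonempty φ hφ
  let w : NormalWord d := NormalWord.equiv g
  refine ⟨w.head, w.toWord, ?_, NormalWord.equiv.symm_apply_apply g⟩
  rintro ⟨i, x⟩ hx hxφ
  exact w.toWord.ne_one _ hx <|
    (d.compl i).eq_one_of_mem_of_mem (one_mem _) (d.one_mem i) hxφ (w.normalized i x hx)

theorem Reduced.conjOf {w : Word G} (hw : Reduced φ w) {i : ι} {a : G i} (ha1 : a ≠ 1)
    (ha : a ∉ (φ i).range) (hwi : w.fstIdx ≠ some i) : Reduced φ (w.conjOf a ha1 hwi) := by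
  simp only [Reduced, Word.conjOf, Word.cons_toList, List.mem_append, List.mem_reverse,
    List.mem_map, List.mem_cons]
  rintro _ (⟨l, hl, rfl⟩ | rfl | hl)
  · exact fun h => hw l hl (inv_mem_iff.1 h)
  · exact ha
  · exact hw _ hl

theorem Reduced.conj_of_notMem_base_range (hφ : ∀ i, Function.Injective (φ i)) {w : Word G}
    (hw : Reduced φ w) {i : ι} (hwi : w.fstIdx ≠ some i) {a : G i} (ha : a ∉ (φ i).range) :
    (ofCoprodI w.prod)⁻¹ * of i a * ofCoprodI w.prod ∉ (base φ).range := by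
  have ha1 : a ≠ 1 := fun h => ha (h ▸ one_mem _)
  intro hmem
  have hempty := (hw.conjOf ha1 ha hwi).eq_empty_of_mem_range hφ <| by
    rwa [Word.prod_conjOf, map_mul, map_mul, map_inv, ofCoprodI_of]
  simpa [Word.conjOf] using congrArg Word.toList hempty

theorem exists_of_conj_mem_base_range (hφ : ∀ i, Function.Injective (φ i)) {c g : PushoutI φ}
    (hc : c ∈ (base φ).range) (hg : g ∉ (base φ).range) (hgc : g⁻¹ * c * g ∈ (base φ).range) :
    ∃ i, ∃ q ∈ (of (φ := φ) i).range, q ∉ (base φ).range ∧ q⁻¹ * c * q ∈ (base φ).range := by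
  obtain ⟨c₀, rfl⟩ := hc
  obtain ⟨h, w, hw, rfl⟩ := exists_base_mul_reduced_eq hφ g
  induction w using Word.consRecOn with
  | empty => exact absurd ⟨h, by simp⟩ hg
  | cons i x t hti hx1 =>
    have hx : x ∉ (φ i).range := hw _ List.mem_cons_self
    have ht : Reduced φ t := fun l hl => hw l (List.mem_cons_of_mem _ hl)
    set q := of (φ := φ) i (φ i h * x)
    set a := x⁻¹ * φ i (h⁻¹ * c₀ * h) * x
    have hq : base φ h * ofCoprodI (Word.cons x t hti hx1).prod = q * ofCoprodI t.prod := by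
      simp [q, ← of_apply_eq_base φ i h, mul_assoc]
    have hqc : q⁻¹ * base φ c₀ * q = of i a := by
      simp only [q, a, ← of_apply_eq_base φ i c₀, map_mul, map_inv]
      group
    by_cases ha : a ∈ (φ i).range
    · refine ⟨i, q, ⟨_, rfl⟩, fun hq' => hx ?_, hqc ▸ (of_mem_base_range_iff hφ).2 ha⟩
      obtain ⟨y, hy⟩ := (of_mem_base_range_iff hφ).1 hq'
      exact ⟨h⁻¹ * y, by rw [map_mul, hy, map_inv, inv_mul_cancel_left]⟩
    · refine absurd ?_ (ht.conj_of_notMem_base_range hφ hti ha)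
      rw [← hqc]
      convert hgc using 1
      rw [hq]
      group

end Monoid.PushoutI

theorem ZG_eq_ZA_union_ZB
    (hφ : Function.Injective φ) (hψ : Function.Injective ψ)
    (c : Amalg φ ψ) (hc : c ∈ amalgC φ ψ) :
    (∃ g : Amalg φ ψ, g ∉ amalgC φ ψ ∧ g⁻¹ * c * g ∈ amalgC φ ψ) ↔
    (∃ q : Amalg φ ψ, (q ∈ facA φ ψ ∨ q ∈ facB φ ψ) ∧ q ∉ amalgC φ ψ ∧
      q⁻¹ * c * q ∈ amalgC φ ψ) := by
  have hinj : ∀ b, Function.Injective (amalgHom φ ψ b)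
    | true => hφ
    | false => hψ
  constructor
  · rintro ⟨g, hg, hgc⟩
    obtain ⟨b, q, hqb, hq, hqc⟩ := Monoid.PushoutI.exists_of_conj_mem_base_range hinj hc hg hgc
    refine ⟨q, ?_, hq, hqc⟩
    cases b
    · exact Or.inr hqb
    · exact Or.inl hqb
  · rintro ⟨q, -, hq, hqc⟩
    exact ⟨q, hq, hqc⟩
end

section
/- Let G be a group, C a subgroup of G, and p₁, …, p_k, p'₁, …, p'_k ∈ G with k ≥ 1. Let E be the set of all c ∈ C for which there exist c₁, …, c_k ∈ C satisfying p_k c = c₁ p'_k, p_{k−1} c₁ = c₂ p'_{k−1}, …, p₁ c_{k−1} = c_k p'₁. Then E = C ∩ ⋂_{j=1}^{k} (p_{k−j+1}⋯p_k)⁻¹ C (p'_{k−j+1}⋯p'_k). In particular, if E is nonempty then for any e ∈ E one has E = D·e, where D = C ∩ ⋂_{j=1}^{k} (p_{k−j+1}⋯p_k)⁻¹ C (p_{k−j+1}⋯p_k) is a subgroup of C; that is, E is a right coset of a subgroup of C. -/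
/-- The set of `c ∈ C` for which the principal system
`p_k c = c₁ p'_k, p_{k−1} c₁ = c₂ p'_{k−1}, …, p₁ c_{k−1} = c_k p'₁` has a solution
`c₁, …, c_k ∈ C` (here `P = [p₁, …, p_k]` and `P' = [p'₁, …, p'_k]`). -/
def principalSolSet {G : Type*} [Group G] (C : Subgroup G) (k : ℕ) (P P' : List G) : Set G :=
  {c : G | c ∈ C ∧ ∃ d : ℕ → G, d 0 = c ∧ (∀ j ≤ k, d j ∈ C) ∧
    ∀ j < k, P.getD (k - 1 - j) 1 * d j = d (j + 1) * P'.getD (k - 1 - j) 1}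

/-- The set `C ∩ ⋂_{j=1}^{k} (p_{k−j+1}⋯p_k)⁻¹ C (p'_{k−j+1}⋯p'_k)`, where the suffix
`p_{j+1}⋯p_k` is `(P.drop j).prod` and `x ∈ w⁻¹ C w'` iff `w x w'⁻¹ ∈ C`. -/
def suffixConjSet {G : Type*} [Group G] (C : Subgroup G) (k : ℕ) (P P' : List G) : Set G :=
  ↑C ∩ ⋂ j ∈ Finset.range k, {x : G | (P.drop j).prod * x * ((P'.drop j).prod)⁻¹ ∈ C}

/-! The equations of the principal system force `c_j = (p_{k−j+1}⋯p_k) c (p'_{k−j+1}⋯p'_k)⁻¹`,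
so `c` is a solution iff all these suffix conjugates lie in `C`. Writing
`w x w'⁻¹ = (w (x e⁻¹) w⁻¹) (w e w'⁻¹)` shows that, once one solution `e` is known, the other
solutions are exactly the `x` with `x e⁻¹` in the intersection `D` of the conjugates
`w⁻¹ C w ∩ C`, which is a subgroup. -/

namespace PrincipalSystem

variable {G : Type*} [Group G]

def suffixConj (P P' : List G) (j : ℕ) (x : G) : G :=
  (P.drop j).prod * x * ((P'.drop j).prod)⁻¹

lemma suffixConj_of_length_le {P P' : List G} {j : ℕ} (hP : P.length ≤ j) (hP' : P'.length ≤ j)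
    (x : G) : suffixConj P P' j x = x := by
  simp [suffixConj, List.drop_eq_nil_of_le hP, List.drop_eq_nil_of_le hP']

lemma suffixConj_eq_getD_mul {P P' : List G} {i : ℕ} (hi : i < P.length)
    (hi' : i < P'.length) (x : G) :
    suffixConj P P' i x = P.getD i 1 * suffixConj P P' (i + 1) x * (P'.getD i 1)⁻¹ := by
  simp only [suffixConj, List.drop_eq_getElem_cons hi, List.drop_eq_getElem_cons hi',
    List.prod_cons, List.getD_eq_getElem _ _ hi, List.getD_eq_getElem _ _ hi']
  group

lemma mem_suffixConjSet {C : Subgroup G} {k : ℕ} {P P' : List G} {x : G} :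
    x ∈ suffixConjSet C k P P' ↔ x ∈ C ∧ ∀ j < k, suffixConj P P' j x ∈ C := by
  simp [suffixConjSet, suffixConj]

lemma principal_system_iff_eq_suffixConj {k : ℕ} {P P' : List G} (hP : P.length = k)
    (hP' : P'.length = k) (d : ℕ → G) :
    (∀ j < k, P.getD (k - 1 - j) 1 * d j = d (j + 1) * P'.getD (k - 1 - j) 1) ↔
      ∀ j ≤ k, d j = suffixConj P P' (k - j) (d 0) := by
  have step : ∀ j < k, ∀ x, suffixConj P P' (k - (j + 1)) x =
      P.getD (k - 1 - j) 1 * suffixConj P P' (k - j) x * (P'.getD (k - 1 - j) 1)⁻¹ := by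
    intro j hj x
    rw [show k - (j + 1) = k - 1 - j by omega, suffixConj_eq_getD_mul (by omega) (by omega),
      show k - 1 - j + 1 = k - j by omega]
  constructor
  · intro hsys j hj
    induction j with
    | zero => exact (suffixConj_of_length_le hP.le hP'.le _).symm
    | succ j ih =>
      rw [eq_mul_inv_of_mul_eq (hsys j hj).symm, ih (by omega), step j hj]
  · intro hd j hj
    rw [← mul_inv_eq_iff_eq_mul, hd j hj.le, hd (j + 1) hj, step j hj]

lemma suffixConj_mem {C : Subgroup G} {k : ℕ} {P P' : List G} (hP : P.length = k)
    (hP' : P'.length = k) {c : G} (hc : c ∈ suffixConjSet C k P P') {i : ℕ} (hi : i ≤ k) :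
    suffixConj P P' i c ∈ C := by
  rw [mem_suffixConjSet] at hc
  rcases hi.lt_or_eq with hi | rfl
  · exact hc.2 i hi
  · rw [suffixConj_of_length_le hP.le hP'.le]
    exact hc.1

theorem principalSolSet_eq_suffixConjSet {C : Subgroup G} {k : ℕ} {P P' : List G}
    (hP : P.length = k) (hP' : P'.length = k) :
    principalSolSet C k P P' = suffixConjSet C k P P' := by
  ext c
  constructor
  · rintro ⟨hc, d, rfl, hdC, hsys⟩
    refine mem_suffixConjSet.2 ⟨hc, fun j hj => ?_⟩
    have := hdC (k - j) (by omega)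
    rwa [(principal_system_iff_eq_suffixConj hP hP' d).1 hsys (k - j) (by omega),
      show k - (k - j) = j by omega] at this
  · intro hc
    have hc0 : suffixConj P P' k c = c := suffixConj_of_length_le hP.le hP'.le c
    refine ⟨(mem_suffixConjSet.1 hc).1, fun j => suffixConj P P' (k - j) c, by simpa using hc0,
      fun j _ => suffixConj_mem hP hP' hc (by omega), ?_⟩
    refine (principal_system_iff_eq_suffixConj hP hP' _).2 fun j _ => ?_
    simp only [Nat.sub_zero, hc0]

lemma suffixConj_mul (P P' : List G) (j : ℕ) (x e : G) :
    suffixConj P P' j x = suffixConj P P j (x * e⁻¹) * suffixConj P P' j e := by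
  simp only [suffixConj]
  group

lemma mem_suffixConjSet_iff_mul_inv_mem {C : Subgroup G} {k : ℕ} {P P' : List G} {e : G}
    (he : e ∈ suffixConjSet C k P P') (x : G) :
    x ∈ suffixConjSet C k P P' ↔ x * e⁻¹ ∈ suffixConjSet C k P P := by
  rw [mem_suffixConjSet] at he
  simp only [mem_suffixConjSet]
  refine and_congr (by rw [C.mul_mem_cancel_right (C.inv_mem he.1)])
    (forall₂_congr fun j hj => ?_)
  rw [suffixConj_mul P P' j x e, C.mul_mem_cancel_right (he.2 j hj)]

def suffixConjSubgroup (C : Subgroup G) (k : ℕ) (P : List G) : Subgroup G :=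
  C ⊓ ⨅ j ∈ Finset.range k, C.comap (MulAut.conj (P.drop j).prod).toMonoidHom

lemma coe_suffixConjSubgroup (C : Subgroup G) (k : ℕ) (P : List G) :
    (suffixConjSubgroup C k P : Set G) = suffixConjSet C k P P := by
  ext x
  simp [suffixConjSubgroup, mem_suffixConjSet, suffixConj, MulAut.conj_apply]

end PrincipalSystem

open PrincipalSystem in
theorem principalSolSet_eq_coset_general {G : Type*} [Group G] (C : Subgroup G) (k : ℕ)
    (P P' : List G) (hP : P.length = k) (hP' : P'.length = k) :
    principalSolSet C k P P' = suffixConjSet C k P P' ∧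
    ∀ e ∈ principalSolSet C k P P',
      (∃ D : Subgroup G, (D : Set G) = suffixConjSet C k P P ∧ D ≤ C) ∧
      principalSolSet C k P P' = (fun x => x * e) '' suffixConjSet C k P P := by
  rw [principalSolSet_eq_suffixConjSet hP hP']
  refine ⟨rfl, fun e he => ⟨⟨suffixConjSubgroup C k P, coe_suffixConjSubgroup C k P,
    inf_le_left⟩, ?_⟩⟩
  rw [Set.image_mul_right]
  ext x
  exact mem_suffixConjSet_iff_mul_inv_mem he x

/-- The solution set `E` of the principal system equals
`C ∩ ⋂_{j=1}^{k} (p_{k−j+1}⋯p_k)⁻¹ C (p'_{k−j+1}⋯p'_k)`; in particular, if `E ≠ ∅` then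
`E = D·e` for any `e ∈ E`, where `D = C ∩ ⋂_{j=1}^{k} (p_{k−j+1}⋯p_k)⁻¹ C (p_{k−j+1}⋯p_k)`
is a subgroup of `C`, so `E` is a right coset of a subgroup of `C`. -/
theorem principalSolSet_eq_coset {G : Type*} [Group G] (C : Subgroup G) (k : ℕ) (hk : 1 ≤ k)
    (P P' : List G) (hP : P.length = k) (hP' : P'.length = k) :
    principalSolSet C k P P' = suffixConjSet C k P P' ∧
    ∀ e ∈ principalSolSet C k P P',
      (∃ D : Subgroup G, (D : Set G) = suffixConjSet C k P P ∧ D ≤ C) ∧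
      principalSolSet C k P P' = (fun x => x * e) '' suffixConjSet C k P P :=
  principalSolSet_eq_coset_general C k P P' hP hP'
end

section
/- Let G be a group, C a subgroup of G, and p₁, …, p_k, p'₁, …, p'_k ∈ G with k ≥ 1. Suppose the system p_k x₀ = x₁ p'_k, p_{k−1} x₁ = x₂ p'_{k−1}, …, p₁ x_{k−1} = x_k p'₁ has two distinct solutions (c, c₁, …, c_k) and (b, b₁, …, b_k) with all entries in C. Then c ≠ b, and setting w = p₁⋯p_k and w' = p'₁⋯p'_k one has w (b c⁻¹) w⁻¹ = b_k c_k⁻¹ ∈ C and w' (c⁻¹ b) w'⁻¹ = c_k⁻¹ b_k ∈ C, with b c⁻¹ ≠ 1. In particular C ∩ w C w⁻¹ ≠ {1} and C ∩ w' C w'⁻¹ ≠ {1}. -/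
/-!
Dividing the `j`-th equation for `b` by the one for `c` shows that
`b_{j+1} c_{j+1}⁻¹ = p (b_j c_j⁻¹) p⁻¹` and `c_{j+1}⁻¹ b_{j+1} = p' (c_j⁻¹ b_j) p'⁻¹`.
Iterating, `b_k c_k⁻¹` and `c_k⁻¹ b_k` are the conjugates of `b c⁻¹` and `c⁻¹ b` by `w` and `w'`.
Conjugation is injective, so the two solutions differ iff they differ at `x₀`, and then
`b_k c_k⁻¹ ≠ 1` lies in `C ∩ w C w⁻¹`, and likewise `c_k⁻¹ b_k ∈ C ∩ w' C w'⁻¹`.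
-/

theorem List.drop_sub_succ_eq_getD_cons {α : Type*} {L : List α} {k j : ℕ} (hL : L.length = k)
    (hj : j < k) (d : α) :
    L.drop (k - (j + 1)) = L.getD (k - 1 - j) d :: L.drop (k - j) := by
  have hlt : k - (j + 1) < L.length := by omega
  rw [List.drop_eq_getElem_cons hlt, show k - 1 - j = k - (j + 1) by omega,
    show k - (j + 1) + 1 = k - j by omega, List.getD_eq_getElem _ _ hlt]

section TwistedConjugacy

variable {G : Type*} [Group G]

theorem mul_inv_eq_conj_of_twisted_eq {p q x y x' y' : G} (h : p * x = y * q)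
    (h' : p * x' = y' * q) : y' * y⁻¹ = p * (x' * x⁻¹) * p⁻¹ := by
  rw [eq_mul_inv_iff_mul_eq.mpr h.symm, eq_mul_inv_iff_mul_eq.mpr h'.symm]
  group

theorem inv_mul_eq_conj_of_twisted_eq {p q x y x' y' : G} (h : p * x = y * q)
    (h' : p * x' = y' * q) : y⁻¹ * y' = q * (x⁻¹ * x') * q⁻¹ := by
  rw [eq_inv_mul_iff_mul_eq.mpr h, eq_inv_mul_iff_mul_eq.mpr h']
  group

theorem eq_conj_drop_prod_of_eq_conj_getD {L : List G} {k : ℕ} (hL : L.length = k) {z : ℕ → G}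
    (hz : ∀ j < k, z (j + 1) = L.getD (k - 1 - j) 1 * z j * (L.getD (k - 1 - j) 1)⁻¹) :
    ∀ j ≤ k, z j = (L.drop (k - j)).prod * z 0 * (L.drop (k - j)).prod⁻¹
  | 0, _ => by simp [← hL]
  | j + 1, hj => by
    have hjk : j < k := hj
    rw [hz j hjk, eq_conj_drop_prod_of_eq_conj_getD hL hz j hjk.le,
      List.drop_sub_succ_eq_getD_cons hL hjk 1, List.prod_cons]
    group

theorem eq_conj_prod_of_eq_conj_getD {L : List G} {k : ℕ} (hL : L.length = k) {z : ℕ → G}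
    (hz : ∀ j < k, z (j + 1) = L.getD (k - 1 - j) 1 * z j * (L.getD (k - 1 - j) 1)⁻¹) :
    z k = L.prod * z 0 * L.prod⁻¹ := by
  simpa using eq_conj_drop_prod_of_eq_conj_getD hL hz k le_rfl

theorem Subgroup.exists_ne_one_mem_conj_mem {C : Subgroup G} {w x : G} (hx : x ∈ C) (hx1 : x ≠ 1)
    (hwx : w * x * w⁻¹ ∈ C) : ∃ z : G, z ∈ C ∧ w⁻¹ * z * w ∈ C ∧ z ≠ 1 :=
  ⟨w * x * w⁻¹, hwx, by simpa [mul_assoc] using hx, conj_eq_one_iff.not.mpr hx1⟩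

end TwistedConjugacy

theorem two_solutions_singular_general {G : Type*} [Group G] (C : Subgroup G) (k : ℕ)
    (P P' : List G) (hP : P.length = k) (hP' : P'.length = k)
    (c b : ℕ → G)
    (hcC : ∀ j ≤ k, c j ∈ C) (hbC : ∀ j ≤ k, b j ∈ C)
    (hc : ∀ j < k, P.getD (k - 1 - j) 1 * c j = c (j + 1) * P'.getD (k - 1 - j) 1)
    (hb : ∀ j < k, P.getD (k - 1 - j) 1 * b j = b (j + 1) * P'.getD (k - 1 - j) 1)
    (hne : ∃ j ≤ k, c j ≠ b j) :
    c 0 ≠ b 0 ∧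
    P.prod * (b 0 * (c 0)⁻¹) * P.prod⁻¹ = b k * (c k)⁻¹ ∧
    b k * (c k)⁻¹ ∈ C ∧
    P'.prod * ((c 0)⁻¹ * b 0) * P'.prod⁻¹ = (c k)⁻¹ * b k ∧
    (c k)⁻¹ * b k ∈ C ∧
    b 0 * (c 0)⁻¹ ≠ 1 ∧
    (∃ z : G, z ∈ C ∧ P.prod⁻¹ * z * P.prod ∈ C ∧ z ≠ 1) ∧
    (∃ z : G, z ∈ C ∧ P'.prod⁻¹ * z * P'.prod ∈ C ∧ z ≠ 1) := by
  have hstep j (hj : j < k) := mul_inv_eq_conj_of_twisted_eq (hc j hj) (hb j hj)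
  have hstep' j (hj : j < k) := inv_mul_eq_conj_of_twisted_eq (hc j hj) (hb j hj)
  have hconj := eq_conj_drop_prod_of_eq_conj_getD hP (z := fun j ↦ b j * (c j)⁻¹) hstep
  have hw := eq_conj_prod_of_eq_conj_getD hP (z := fun j ↦ b j * (c j)⁻¹) hstep
  have hw' := eq_conj_prod_of_eq_conj_getD hP' (z := fun j ↦ (c j)⁻¹ * b j) hstep'
  have hne0 : c 0 ≠ b 0 := by
    intro h0
    obtain ⟨j, hj, hcb⟩ := hne
    have : b j * (c j)⁻¹ = 1 := by rw [hconj j hj, h0, mul_inv_cancel, mul_one, mul_inv_cancel]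
    exact hcb (mul_inv_eq_one.mp this).symm
  have hmem : b 0 * (c 0)⁻¹ ∈ C := mul_mem (hbC 0 k.zero_le) (inv_mem (hcC 0 k.zero_le))
  have hmem' : (c 0)⁻¹ * b 0 ∈ C := mul_mem (inv_mem (hcC 0 k.zero_le)) (hbC 0 k.zero_le)
  have hkmem : b k * (c k)⁻¹ ∈ C := mul_mem (hbC k le_rfl) (inv_mem (hcC k le_rfl))
  have hkmem' : (c k)⁻¹ * b k ∈ C := mul_mem (inv_mem (hcC k le_rfl)) (hbC k le_rfl)
  have hne1 : b 0 * (c 0)⁻¹ ≠ 1 := mul_inv_eq_one.not.mpr (Ne.symm hne0)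
  have hne1' : (c 0)⁻¹ * b 0 ≠ 1 := inv_mul_eq_one.not.mpr hne0
  exact ⟨hne0, hw.symm, hkmem, hw'.symm, hkmem', hne1,
    Subgroup.exists_ne_one_mem_conj_mem hmem hne1 (hw ▸ hkmem),
    Subgroup.exists_ne_one_mem_conj_mem hmem' hne1' (hw' ▸ hkmem')⟩

/-- If the principal system `p_k x₀ = x₁ p'_k, …, p₁ x_{k−1} = x_k p'₁` has two distinct
solutions `(c, c₁, …, c_k)` and `(b, b₁, …, b_k)` in `C`, then `c ≠ b`, and with
`w = p₁⋯p_k`, `w' = p'₁⋯p'_k` one has `w (b c⁻¹) w⁻¹ = b_k c_k⁻¹ ∈ C` and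
`w' (c⁻¹ b) w'⁻¹ = c_k⁻¹ b_k ∈ C` with `b c⁻¹ ≠ 1`; in particular
`C ∩ w C w⁻¹ ≠ {1}` and `C ∩ w' C w'⁻¹ ≠ {1}`. -/
theorem two_solutions_singular {G : Type*} [Group G] (C : Subgroup G) (k : ℕ) (hk : 1 ≤ k)
    (P P' : List G) (hP : P.length = k) (hP' : P'.length = k)
    (c b : ℕ → G)
    (hcC : ∀ j ≤ k, c j ∈ C) (hbC : ∀ j ≤ k, b j ∈ C)
    (hc : ∀ j < k, P.getD (k - 1 - j) 1 * c j = c (j + 1) * P'.getD (k - 1 - j) 1)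
    (hb : ∀ j < k, P.getD (k - 1 - j) 1 * b j = b (j + 1) * P'.getD (k - 1 - j) 1)
    (hne : ∃ j ≤ k, c j ≠ b j) :
    c 0 ≠ b 0 ∧
    P.prod * (b 0 * (c 0)⁻¹) * P.prod⁻¹ = b k * (c k)⁻¹ ∧
    b k * (c k)⁻¹ ∈ C ∧
    P'.prod * ((c 0)⁻¹ * b 0) * P'.prod⁻¹ = (c k)⁻¹ * b k ∧
    (c k)⁻¹ * b k ∈ C ∧
    b 0 * (c 0)⁻¹ ≠ 1 ∧
    (∃ z : G, z ∈ C ∧ P.prod⁻¹ * z * P.prod ∈ C ∧ z ≠ 1) ∧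
    (∃ z : G, z ∈ C ∧ P'.prod⁻¹ * z * P'.prod ∈ C ∧ z ≠ 1) :=
  two_solutions_singular_general C k P P' hP hP' c b hcC hbC hc hb hne
end

section
/- Suppose C is malnormal in A and malnormal in B (as subgroups of G = A ∗_C B). Then for every subgroup D of C and every g ∈ G ∖ C one has D ∩ g⁻¹ D g = {1}; in particular, C itself is malnormal in G. -/
open Monoid

universe u

variable {A B C : Type u} [Group A] [Group B] [Group C]

variable (φ : C →* A) (ψ : C →* B)

/-- `C` is malnormal in `K` (both viewed as subgroups of an ambient group):
`C ∩ x⁻¹ C x = {1}` for every `x ∈ K ∖ C`. -/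
def MalnormalIn {G : Type*} [Group G] (C K : Subgroup G) : Prop :=
  ∀ x ∈ K, x ∉ C → ∀ y ∈ C, x * y * x⁻¹ ∈ C → y = 1

/-!
Write `g ∉ C` in reduced form `c g₁ ⋯ gₙ` with `n ≥ 1`. If `1 ≠ y ∈ C`, malnormality of `C` in the
factor containing `gₙ` gives `gₙ y gₙ⁻¹ ∉ C`, so `g₁ ⋯ gₙ₋₁ (gₙ y gₙ⁻¹) gₙ₋₁⁻¹ ⋯ g₁⁻¹` is again a
nonempty reduced word. By the normal form theorem it does not lie in `C`, and neither does its
conjugate `g y g⁻¹` by `c`.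
-/

namespace Monoid.PushoutI

open CoprodI Function

variable {ι : Type*} {G : ι → Type*} [∀ i, Group (G i)] {H : Type*} [Group H]
  {φ : ∀ i, H →* G i}

theorem reduced_singleton {i : ι} {g : G i} (hg : g ≠ 1) :
    Reduced φ (NeWord.singleton g hg).toWord ↔ g ∉ (φ i).range := by
  simp [Reduced, NeWord.toWord]

theorem reduced_append {i j k l : ι} {w₁ : NeWord G i j} (hjk : j ≠ k) {w₂ : NeWord G k l} :
    Reduced φ (w₁.append hjk w₂).toWord ↔ Reduced φ w₁.toWord ∧ Reduced φ w₂.toWord := by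
  simp only [Reduced, NeWord.toWord, NeWord.toList, List.mem_append]
  exact ⟨fun h => ⟨fun g hg => h g (.inl hg), fun g hg => h g (.inr hg)⟩,
    fun h g hg => hg.elim (h.1 g) (h.2 g)⟩

theorem Reduced.neWord_inv {i j : ι} {w : NeWord G i j} (hw : Reduced φ w.toWord) :
    Reduced φ w.inv.toWord := by
  induction w with
  | singleton g hg =>
    rw [reduced_singleton] at hw
    rw [NeWord.inv, reduced_singleton, inv_mem_iff]
    exact hw
  | append w₁ hjk w₂ ih₁ ih₂ =>
    rw [reduced_append] at hw
    rw [NeWord.inv, reduced_append]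
    exact ⟨ih₂ hw.2, ih₁ hw.1⟩

theorem exists_reduced_neWord_conj (hmal : ∀ i, MalnormalIn (φ i).range ⊤)
    {i j : ι} (w : NeWord G i j) (hw : Reduced φ w.toWord)
    {c : G j} (hc : c ∈ (φ j).range) (hc1 : c ≠ 1) :
    ∃ v : NeWord G i i, Reduced φ v.toWord ∧ v.prod = w.prod * CoprodI.of c * w.prod⁻¹ := by
  induction w with
  | @singleton i g hg =>
    rw [reduced_singleton] at hw
    have hconj : g * c * g⁻¹ ∉ (φ i).range := fun h => hc1 (hmal i g trivial hw c hc h)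
    refine ⟨.singleton (g * c * g⁻¹) fun h => hconj (h ▸ one_mem _), ?_, ?_⟩
    · rwa [reduced_singleton]
    · simp
  | append w₁ hjk w₂ _ ih₂ =>
    rw [reduced_append] at hw
    obtain ⟨v, hv, hvprod⟩ := ih₂ hw.2 hc hc1
    refine ⟨(w₁.append hjk v).append hjk.symm w₁.inv, ?_, ?_⟩
    · rw [reduced_append, reduced_append]
      exact ⟨⟨hw.1, hv⟩, hw.1.neWord_inv⟩
    · simp only [NeWord.append_prod, NeWord.inv_prod, hvprod, mul_inv_rev]
      group

theorem exists_eq_base_mul_reduced (hφ : ∀ i, Injective (φ i)) (x : PushoutI φ) :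
    ∃ (h : H) (w : Word G), Reduced φ w ∧ x = base φ h * ofCoprodI w.prod := by
  classical
  obtain ⟨d⟩ := NormalWord.transversal_nonempty φ hφ
  let w : NormalWord d := x • NormalWord.empty
  refine ⟨w.head, w.toWord, fun g hg hrange => w.ne_one g hg ?_, ?_⟩
  · -- a letter of a normal word lies both in the transversal and in the base, so it is `1`
    have hset := congrArg Subtype.val <|
      (d.compl g.1).equiv_snd_eq_self_of_mem_of_one_mem (one_mem _) (w.normalized g.1 g.2 hg)
    rwa [(d.compl g.1).equiv_snd_eq_one_of_mem_of_one_mem (d.one_mem g.1) hrange, eq_comm] at hset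
  · rw [← NormalWord.prod, NormalWord.prod_smul, NormalWord.prod_empty, mul_one]

theorem malnormalIn_range_of_malnormalIn_base_range (hφ : ∀ i, Injective (φ i)) {i : ι}
    (hmal : MalnormalIn (base φ).range (of i).range) : MalnormalIn (φ i).range ⊤ := by
  rintro g - hg _ ⟨h, rfl⟩ ⟨h', hh'⟩
  have hof : of (φ := φ) i g ∉ (base φ).range := by
    rintro ⟨h'', hh''⟩
    rw [← of_apply_eq_base φ i] at hh''
    exact hg ⟨h'', of_injective hφ i hh''⟩
  have hconj : of i g * base φ h * (of i g)⁻¹ = base φ h' := by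
    rw [← of_apply_eq_base φ i, ← of_apply_eq_base φ i, hh', map_mul, map_mul, map_inv]
  have := hmal _ ⟨g, rfl⟩ hof _ ⟨h, rfl⟩ (hconj ▸ ⟨h', rfl⟩)
  rw [← of_apply_eq_base φ i, ← map_one (of i)] at this
  exact of_injective hφ i this

theorem malnormalIn_base_range (hφ : ∀ i, Injective (φ i))
    (hmal : ∀ i, MalnormalIn (base φ).range (of i).range) : MalnormalIn (base φ).range ⊤ := by
  rintro x - hx _ ⟨h, rfl⟩ hconj
  obtain ⟨c, w, hw, rfl⟩ := exists_eq_base_mul_reduced hφ x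
  have hw0 : w ≠ .empty := by
    rintro rfl
    exact hx ⟨c, by simp⟩
  obtain ⟨i, j, w, rfl⟩ := NeWord.of_word w hw0
  by_contra hh
  have hφh : φ j h ≠ 1 := fun h1 => hh (by rw [← of_apply_eq_base φ j, h1, map_one])
  obtain ⟨v, hv, hvprod⟩ := exists_reduced_neWord_conj
    (fun i => malnormalIn_range_of_malnormalIn_base_range hφ (hmal i)) w hw ⟨h, rfl⟩ hφh
  have hvC : ofCoprodI v.prod ∈ (base φ).range := by
    have : ofCoprodI v.prod = base φ c⁻¹ * ((base φ c * ofCoprodI w.prod) * base φ h *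
        (base φ c * ofCoprodI w.prod)⁻¹) * base φ c := by
      rw [hvprod, map_mul, map_mul, map_inv, ofCoprodI_of, of_apply_eq_base, map_inv]
      group
    rw [this]
    exact mul_mem (mul_mem ⟨c⁻¹, rfl⟩ hconj) ⟨c, rfl⟩
  exact v.toList_ne_nil (congrArg Word.toList (hv.eq_empty_of_mem_range hφ hvC))

end Monoid.PushoutI

/-- If `C` is malnormal in both factors `A` and `B`, then for every subgroup `D ≤ C` and every
`g ∈ G ∖ C` one has `D ∩ g⁻¹ D g = {1}`; in particular `C` is malnormal in `G = A ∗_C B`. -/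
theorem malnormal_both_factors
    (hφ : Function.Injective φ) (hψ : Function.Injective ψ)
    (hA : MalnormalIn (amalgC φ ψ) (facA φ ψ))
    (hB : MalnormalIn (amalgC φ ψ) (facB φ ψ))
    (D : Subgroup (Amalg φ ψ)) (hD : D ≤ amalgC φ ψ)
    (g : Amalg φ ψ) (hg : g ∉ amalgC φ ψ) :
    (∀ y ∈ D, g * y * g⁻¹ ∈ D → y = 1) ∧
    (∀ y ∈ amalgC φ ψ, g * y * g⁻¹ ∈ amalgC φ ψ → y = 1) := by
  have hC : MalnormalIn (amalgC φ ψ) ⊤ :=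
    PushoutI.malnormalIn_base_range (Bool.forall_bool.2 ⟨hψ, hφ⟩) (Bool.forall_bool.2 ⟨hB, hA⟩)
  have hgC := hC g trivial hg
  exact ⟨fun y hy hgy => hgC y (hD hy) (hD hgy), hgC⟩
end

section
/- Suppose C is malnormal in at least one of the factors A, B of G = A ∗_C B. Then for every subgroup D of C and every g ∈ G that lies neither in A nor in B (equivalently, every g of reduced length at least 2), one has D ∩ g⁻¹ D g = {1}. -/
/-!
Write `g = c g₁ ⋯ gₙ` in reduced form. As `g` lies in neither factor, letters of both factors
occur. If `y ∈ C` and `g y g⁻¹ ∈ C`, peel the letters off from the right: each `gₖ` must conjugate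
the current element `yₖ ∈ C` back into `C`, since otherwise
`g₁ ⋯ gₖ₋₁ (gₖ yₖ gₖ⁻¹) gₖ₋₁⁻¹ ⋯ g₁⁻¹` would be a nonempty reduced word lying in `C`,
contradicting the normal form theorem. At a letter from the factor in which `C` is malnormal
this forces `yₖ = 1`, hence `y = 1`.
-/

open Monoid

universe u

variable {A B C : Type u} [Group A] [Group B] [Group C]

variable (φ : C →* A) (ψ : C →* B)

namespace Monoid.PushoutI

open Function

variable {ι : Type*} {G : ι → Type*} {H : Type*} [∀ i, Group (G i)] [Group H]
  {φ : ∀ i, H →* G i}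

variable (φ) in
def listProd (ℓ : List (Σ i, G i)) : PushoutI φ :=
  (ℓ.map fun l => of l.1 l.2).prod

@[simp] lemma listProd_nil : listProd φ [] = 1 := rfl

@[simp] lemma listProd_cons (l : Σ i, G i) (ℓ : List (Σ i, G i)) :
    listProd φ (l :: ℓ) = of l.1 l.2 * listProd φ ℓ := by
  simp [listProd]

@[simp] lemma listProd_append (ℓ₁ ℓ₂ : List (Σ i, G i)) :
    listProd φ (ℓ₁ ++ ℓ₂) = listProd φ ℓ₁ * listProd φ ℓ₂ := by
  simp [listProd]

lemma ofCoprodI_word_prod (w : CoprodI.Word G) :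
    ofCoprodI (φ := φ) w.prod = listProd φ w.toList := by
  simp [CoprodI.Word.prod, listProd, map_list_prod, List.map_map, Function.comp_def]

def invRev (ℓ : List (Σ i, G i)) : List (Σ i, G i) :=
  (ℓ.map fun l => ⟨l.1, l.2⁻¹⟩).reverse

@[simp] lemma listProd_invRev (ℓ : List (Σ i, G i)) :
    listProd φ (invRev ℓ) = (listProd φ ℓ)⁻¹ := by
  simp [listProd, invRev, List.prod_inv_reverse, List.map_reverse, Function.comp_def]

variable (φ) in
def ReducedList (ℓ : List (Σ i, G i)) : Prop :=
  (∀ l ∈ ℓ, l.2 ∉ (φ l.1).range) ∧ ℓ.IsChain fun l l' => l.1 ≠ l'.1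

lemma reducedList_append {ℓ₁ ℓ₂ : List (Σ i, G i)} :
    ReducedList φ (ℓ₁ ++ ℓ₂) ↔ ReducedList φ ℓ₁ ∧ ReducedList φ ℓ₂ ∧
      ∀ l₁ ∈ ℓ₁.getLast?, ∀ l₂ ∈ ℓ₂.head?, l₁.1 ≠ l₂.1 := by
  simp only [ReducedList, List.mem_append, or_imp, forall_and, List.isChain_append]
  tauto

lemma reducedList_singleton {i : ι} {a : G i} :
    ReducedList φ [⟨i, a⟩] ↔ a ∉ (φ i).range := by
  simp [ReducedList]

lemma reducedList_invRev {ℓ : List (Σ i, G i)} (h : ReducedList φ ℓ) :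
    ReducedList φ (invRev ℓ) := by
  refine ⟨?_, ?_⟩
  · intro l hl
    obtain ⟨l', hl', rfl⟩ := List.mem_map.1 (List.mem_reverse.1 hl)
    exact fun hr => h.1 l' hl' (inv_mem_iff.1 hr)
  · simpa [invRev, List.isChain_map, List.isChain_reverse, ne_comm] using h.2

lemma ReducedList.listProd_notMem_range_base (hφ : ∀ i, Injective (φ i))
    {ℓ : List (Σ i, G i)} (h : ReducedList φ ℓ) (hne : ℓ ≠ []) :
    listProd φ ℓ ∉ (base φ).range := by
  intro hmem
  let w : CoprodI.Word G := ⟨ℓ, fun l hl h1 => h.1 l hl (h1 ▸ one_mem _), h.2⟩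
  have hw : Reduced φ w := h.1
  have := hw.eq_empty_of_mem_range hφ (by rwa [ofCoprodI_word_prod])
  exact hne (congrArg CoprodI.Word.toList this)

lemma ReducedList.mem_range_of_conj_mem_range_base (hφ : ∀ i, Injective (φ i))
    {ℓ : List (Σ i, G i)} (h : ReducedList φ ℓ) {i : ι} (hlast : ∀ l ∈ ℓ.getLast?, l.1 ≠ i)
    {z : G i} (hz : listProd φ ℓ * of i z * (listProd φ ℓ)⁻¹ ∈ (base φ).range) :
    z ∈ (φ i).range := by
  by_contra hzφ
  have hpal : ReducedList φ (ℓ ++ [⟨i, z⟩] ++ invRev ℓ) := by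
    refine reducedList_append.2 ⟨reducedList_append.2 ⟨h, reducedList_singleton.2 hzφ, ?_⟩,
      reducedList_invRev h, ?_⟩
    · simpa using hlast
    · simp only [invRev, List.head?_reverse, List.getLast?_map, List.getLast?_concat,
        Option.mem_def, Option.some.injEq, Option.map_eq_some_iff]
      rintro _ rfl _ ⟨l, hl, rfl⟩
      exact (hlast l hl).symm
  exact hpal.listProd_notMem_range_base hφ (by simp) (by simpa [mul_assoc] using hz)

lemma of_mem_range_base_iff (hφ : ∀ i, Injective (φ i)) {i : ι} {a : G i} :
    of i a ∈ (base φ).range ↔ a ∈ (φ i).range := by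
  refine ⟨fun h => ?_, fun ⟨c, hc⟩ => ⟨c, by rw [← hc, of_apply_eq_base]⟩⟩
  exact (show ReducedList φ [] from ⟨by simp, .nil⟩).mem_range_of_conj_mem_range_base hφ
    (by simp) (by simpa using h)

theorem ReducedList.eq_one_of_conj_mem_range_base (hφ : ∀ i, Injective (φ i)) {i₀ : ι}
    (hmal : MalnormalIn (base φ).range (of i₀).range) {ℓ : List (Σ i, G i)}
    (hℓ : ReducedList φ ℓ) (hi₀ : i₀ ∈ ℓ.map Sigma.fst) {y : PushoutI φ}
    (hy : y ∈ (base φ).range) (hconj : listProd φ ℓ * y * (listProd φ ℓ)⁻¹ ∈ (base φ).range) :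
    y = 1 := by
  induction ℓ using List.reverseRecOn generalizing y with
  | nil => simp at hi₀
  | append_singleton ℓ l ih =>
    obtain ⟨i, a⟩ := l
    obtain ⟨hℓ, ha, hlast⟩ := reducedList_append.1 hℓ
    obtain ⟨c, rfl⟩ := hy
    have hconj' : listProd φ ℓ * (of i a * base φ c * (of i a)⁻¹) * (listProd φ ℓ)⁻¹ ∈
        (base φ).range := by
      simpa [mul_assoc] using hconj
    have hy' : of i a * base φ c * (of i a)⁻¹ ∈ (base φ).range := by
      rw [← of_apply_eq_base φ i, ← map_inv, ← map_mul, ← map_mul] at hconj' ⊢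
      exact (of_mem_range_base_iff hφ).2 <|
        hℓ.mem_range_of_conj_mem_range_base hφ (by simpa using hlast) hconj'
    by_cases hi : i = i₀
    · subst hi
      refine hmal (of i a) ⟨a, rfl⟩ ?_ _ ⟨c, rfl⟩ hy'
      rwa [of_mem_range_base_iff hφ, ← reducedList_singleton]
    · have hi₀ : i₀ ∈ ℓ.map Sigma.fst := by
        simpa [Ne.symm hi] using hi₀
      exact conj_eq_one_iff.1 (ih hℓ hi₀ hy' hconj')

lemma NormalWord.Transversal.eq_one_of_mem_set_of_mem_range (d : NormalWord.Transversal φ)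
    {i : ι} {x : G i} (hs : x ∈ d.set i) (hr : x ∈ (φ i).range) : x = 1 :=
  congrArg (fun p => (p.1 : G i)) <|
    (d.compl i).1 (a₁ := (⟨x, hr⟩, ⟨1, d.one_mem i⟩)) (a₂ := (1, ⟨x, hs⟩)) (by simp)

lemma base_mul_listProd_mem_range_of {i : ι} {ℓ : List (Σ i, G i)} (h : ∀ l ∈ ℓ, l.1 = i)
    (c : H) : base φ c * listProd φ ℓ ∈ (of i).range := by
  refine mul_mem ⟨φ i c, of_apply_eq_base φ i c⟩ (list_prod_mem ?_)
  simp only [List.mem_map]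
  rintro _ ⟨⟨j, a⟩, hl, rfl⟩
  obtain rfl : j = i := h _ hl
  exact ⟨a, rfl⟩

theorem exists_reducedList_eq_base_mul (hφ : ∀ i, Injective (φ i)) (g : PushoutI φ) :
    ∃ c ℓ, ReducedList φ ℓ ∧ g = base φ c * listProd φ ℓ := by
  classical
  obtain ⟨d⟩ := NormalWord.transversal_nonempty φ hφ
  let w : NormalWord d := g • NormalWord.empty
  refine ⟨w.head, w.toList, ⟨fun l hl hφl => w.ne_one l hl ?_, w.chain_ne⟩, ?_⟩
  · exact d.eq_one_of_mem_set_of_mem_range (w.normalized l.1 l.2 hl) hφl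
  · rw [← ofCoprodI_word_prod, ← NormalWord.prod, NormalWord.prod_smul, NormalWord.prod_empty,
      mul_one]

end Monoid.PushoutI

/-- If `C` is malnormal in at least one of the factors `A`, `B`, then for every subgroup
`D ≤ C` and every `g ∈ G` lying neither in `A` nor in `B` (i.e. of reduced length `≥ 2`),
one has `D ∩ g⁻¹ D g = {1}`. -/
theorem malnormal_one_factor
    (hφ : Function.Injective φ) (hψ : Function.Injective ψ)
    (hmal : MalnormalIn (amalgC φ ψ) (facA φ ψ) ∨ MalnormalIn (amalgC φ ψ) (facB φ ψ))
    (D : Subgroup (Amalg φ ψ)) (hD : D ≤ amalgC φ ψ)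
    (g : Amalg φ ψ) (hgA : g ∉ facA φ ψ) (hgB : g ∉ facB φ ψ) :
    ∀ y ∈ D, g * y * g⁻¹ ∈ D → y = 1 := by
  intro y hy hgy
  have hinj : ∀ b, Function.Injective (amalgHom φ ψ b) := Bool.forall_bool.2 ⟨hψ, hφ⟩
  obtain ⟨c, ℓ, hℓ, rfl⟩ := PushoutI.exists_reducedList_eq_base_mul hinj g
  have hboth : ∀ b, b ∈ ℓ.map Sigma.fst := by
    intro b
    by_contra hb
    have hall : ∀ l ∈ ℓ, l.1 = !b := fun l hl =>
      Bool.eq_not_iff.2 fun h => hb (h ▸ List.mem_map_of_mem hl)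
    cases b
    · exact hgA (PushoutI.base_mul_listProd_mem_range_of hall c)
    · exact hgB (PushoutI.base_mul_listProd_mem_range_of hall c)
  have hc : PushoutI.base (amalgHom φ ψ) c ∈ amalgC φ ψ := ⟨c, rfl⟩
  have hconj : PushoutI.listProd _ ℓ * y * (PushoutI.listProd _ ℓ)⁻¹ ∈ amalgC φ ψ := by
    convert mul_mem (mul_mem (inv_mem hc) (hD hgy)) hc using 1
    group
  rcases hmal with hm | hm
  · exact hℓ.eq_one_of_conj_mem_range_base hinj hm (hboth true) (hD hy) hconj
  · exact hℓ.eq_one_of_conj_mem_range_base hinj hm (hboth false) (hD hy) hconj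
end

section
/- Let G = A ∗ B be the free product of two groups A and B, with A and B identified with their images under the canonical (injective) embeddings into G. Then the free factor A is malnormal in G: for every g ∈ G ∖ A one has A ∩ g⁻¹ A g = {1}. (By symmetry the same holds for B.) -/
/-!
Write `g = c t` with `c ∈ A` and `t` a reduced word whose first letter is not in `A`; `t ≠ 1`
as `g ∉ A`. If `g a g⁻¹ = b` with `a, b ∈ A`, then `t⁻¹ (c⁻¹ b c) t = a`. Were `c⁻¹ b c ≠ 1`,
the left side would be a reduced word of length at least three, which cannot equal an element
of `A`. Hence `b = 1`, and so `a = 1`.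
-/

open Function

def Subgroup.IsMalnormal {G : Type*} [Group G] (H : Subgroup G) : Prop :=
  ∀ g ∉ H, ∀ x ∈ H, g * x * g⁻¹ ∈ H → x = 1

theorem Subgroup.IsMalnormal.comap {G G' : Type*} [Group G] [Group G'] {H : Subgroup G'}
    (hH : H.IsMalnormal) {f : G →* G'} (hf : Injective f) : (H.comap f).IsMalnormal := by
  intro g hg x hx hconj
  refine hf ?_
  rw [map_one]
  exact hH (f g) hg (f x) hx (by simpa using hconj)

namespace Monoid.CoprodI

variable {ι : Type*}

theorem Word.prod_injective {M : ι → Type*} [∀ i, Monoid (M i)] [DecidableEq ι]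
    [∀ i, DecidableEq (M i)] : Injective (Word.prod : Word M → CoprodI M) :=
  Word.equiv.symm.injective

theorem NeWord.fstIdx_toWord {M : ι → Type*} [∀ i, Monoid (M i)] {i j : ι} (w : NeWord M i j) :
    w.toWord.fstIdx = some i := by
  simp [Word.fstIdx, NeWord.toWord]

theorem NeWord.append_prod_ne_of {M : ι → Type*} [∀ i, Monoid (M i)] {i j k l m : ι}
    (w₁ : NeWord M i j) (hne : j ≠ k) (w₂ : NeWord M k l) (x : M m) :
    (w₁.append hne w₂).prod ≠ of x := by
  classical
  intro h
  by_cases hx : x = 1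
  · have := Word.prod_injective (h.trans (by rw [hx, map_one, Word.prod_empty]))
    exact (w₁.append hne w₂).toList_ne_nil (congrArg Word.toList this)
  · have := congrArg (·.toList.length)
      (Word.prod_injective (h.trans (NeWord.prod_singleton x hx).symm))
    have h₁ := List.length_pos_of_ne_nil w₁.toList_ne_nil
    have h₂ := List.length_pos_of_ne_nil w₂.toList_ne_nil
    simp only [NeWord.toWord, NeWord.toList, List.length_append, List.length_cons,
      List.length_nil, zero_add] at this
    omega

variable {G : ι → Type*} [∀ i, Group (G i)]

theorem NeWord.eq_one_of_inv_prod_mul_of_mul_prod_eq_of {i j k : ι} (w : NeWord G j k)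
    (hji : j ≠ i) {a b : G i} (h : w.prod⁻¹ * of b * w.prod = of a) : b = 1 := by
  by_contra hb
  refine NeWord.append_prod_ne_of (w.inv.append hji (.singleton b hb)) hji.symm w a ?_
  rw [NeWord.append_prod, NeWord.append_prod, NeWord.prod_singleton, NeWord.inv_prod, h]

theorem isMalnormal_range_of (i : ι) : (of : G i →* CoprodI G).range.IsMalnormal := by
  classical
  rintro g hg _ ⟨a, rfl⟩ ⟨b, hb⟩
  set p := Word.equivPair i (Word.equiv g)
  have hg_eq : g = of p.head * p.tail.prod := by
    rw [← Word.prod_rcons, ← Word.equivPair_symm, Equiv.symm_apply_apply]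
    exact (Word.equiv.symm_apply_apply g).symm
  have htail : p.tail ≠ Word.empty := by
    intro h
    exact hg ⟨p.head, by rw [hg_eq, h, Word.prod_empty, mul_one]⟩
  obtain ⟨j, k, w, hw⟩ := NeWord.of_word p.tail htail
  have hji : j ≠ i := fun hj => p.fstIdx_ne (by rw [← hw, NeWord.fstIdx_toWord, hj])
  have hconj : w.prod⁻¹ * of (p.head⁻¹ * b * p.head) * w.prod = of a := by
    rw [NeWord.prod, hw, map_mul, map_mul, map_inv, hb, hg_eq]
    group
  have hb_conj := w.eq_one_of_inv_prod_mul_of_mul_prod_eq_of hji hconj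
  rw [← hconj, hb_conj, map_one]
  group

end Monoid.CoprodI

namespace Monoid.Coprod

universe u v

variable {A : Type u} {B : Type v} [Group A] [Group B]

/-- `A ∗ B` as the indexed coproduct of `true ↦ A`, `false ↦ B`; the `ULift`s put both
factors in one universe. -/
abbrev boolFamily (A : Type u) (B : Type v) : Bool → Type (max u v) :=
  fun b => cond b (ULift.{v} A) (ULift.{u} B)

instance instGroupBoolFamily : ∀ b, Group (boolFamily A B b)
  | true => inferInstanceAs (Group (ULift A))
  | false => inferInstanceAs (Group (ULift B))

def toCoprodI : A ∗ B →* CoprodI (boolFamily A B) :=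
  lift ((CoprodI.of (i := true)).comp MulEquiv.ulift.symm.toMonoidHom)
    ((CoprodI.of (i := false)).comp MulEquiv.ulift.symm.toMonoidHom)

def ofCoprodI : CoprodI (boolFamily A B) →* A ∗ B :=
  CoprodI.lift fun
    | true => inl.comp MulEquiv.ulift.toMonoidHom
    | false => inr.comp MulEquiv.ulift.toMonoidHom

theorem ofCoprodI_comp_toCoprodI :
    (ofCoprodI : _ →* A ∗ B).comp toCoprodI = MonoidHom.id _ := by
  apply hom_ext <;> ext <;> simp [toCoprodI, ofCoprodI]

theorem toCoprodI_injective : Injective (toCoprodI : A ∗ B →* _) :=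
  LeftInverse.injective (g := ofCoprodI) (DFunLike.congr_fun ofCoprodI_comp_toCoprodI)

theorem comap_toCoprodI_range_of :
    (CoprodI.of (M := boolFamily A B) (i := true)).range.comap toCoprodI =
      (inl : A →* A ∗ B).range := by
  ext g
  constructor
  · rintro ⟨c, hc⟩
    refine ⟨c.down, toCoprodI_injective ?_⟩
    rw [← hc]
    rfl
  · rintro ⟨a, rfl⟩
    exact ⟨ULift.up a, rfl⟩

end Monoid.Coprod

/-- In a free product `G = A ∗ B`, the free factor `A` is malnormal:
`A ∩ g⁻¹ A g = {1}` for every `g ∈ G ∖ A`. -/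
theorem freeProduct_factor_malnormal {A B : Type*} [Group A] [Group B]
    (g : Monoid.Coprod A B)
    (hg : g ∉ (Monoid.Coprod.inl : A →* Monoid.Coprod A B).range) :
    ∀ x ∈ (Monoid.Coprod.inl : A →* Monoid.Coprod A B).range,
      g * x * g⁻¹ ∈ (Monoid.Coprod.inl : A →* Monoid.Coprod A B).range → x = 1 := by
  have h := (Monoid.CoprodI.isMalnormal_range_of (G := Monoid.Coprod.boolFamily A B) true).comap
    Monoid.Coprod.toCoprodI_injective
  rw [Monoid.Coprod.comap_toCoprodI_range_of] at h
  exact h g hg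
end

section
/- Let G be a group and H a subgroup of G. (a) For all g ∈ G and all u, v ∈ H, Z_{ugv}(H) = u·Z_g(H)·u⁻¹. (b) Suppose T ⊆ G is a set of double coset representatives of H in N*_G(H), i.e. N*_G(H) is the union of the double cosets HtH over t ∈ T. Then Z_G(H) = ⋃_{t ∈ T ∖ H} ⋃_{h ∈ H} h·Z_t(H)·h⁻¹. -/
/-- `Z_g(H) = {h ∈ H : g⁻¹ h g ∈ H}`. -/
def Zset {G : Type*} [Group G] (H : Subgroup G) (g : G) : Set G :=
  {h : G | h ∈ H ∧ g⁻¹ * h * g ∈ H}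

/-- The generalized normalizer `N*_G(H) = {g ∈ G : H ∩ g⁻¹ H g ≠ {1}}`. -/
def genNormalizer {G : Type*} [Group G] (H : Subgroup G) : Set G :=
  {g : G | ∃ h : G, h ∈ H ∧ g * h * g⁻¹ ∈ H ∧ h ≠ 1}

/-- `Z_G(H) = ⋃_{g ∈ N*_G(H) ∖ H} Z_g(H)`. -/
def ZsetG {G : Type*} [Group G] (H : Subgroup G) : Set G :=
  ⋃ g ∈ genNormalizer H \ (H : Set G), Zset H g

theorem Subgroup.mul_mul_mem_iff {G : Type*} [Group G] {H : Subgroup G} {u v x : G}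
    (hu : u ∈ H) (hv : v ∈ H) : u * x * v ∈ H ↔ x ∈ H := by
  rw [H.mul_mem_cancel_right hv, H.mul_mem_cancel_left hu]

namespace Zset

open Subgroup

variable {G : Type*} [Group G] {H : Subgroup G}

theorem mul_right_eq (g : G) {v : G} (hv : v ∈ H) : Zset H (g * v) = Zset H g := by
  ext z
  have hconj : (g * v)⁻¹ * z * (g * v) = v⁻¹ * (g⁻¹ * z * g) * v := by group
  simp only [Zset, Set.mem_ofPred_eq, hconj, mul_mul_mem_iff (H.inv_mem hv) hv]

theorem mul_left_eq_image (g : G) {u : G} (hu : u ∈ H) :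
    Zset H (u * g) = (fun z => u * z * u⁻¹) '' Zset H g := by
  ext z
  constructor
  · rintro ⟨hz, hgz⟩
    refine ⟨u⁻¹ * z * u, ⟨mul_mul_mem_iff (H.inv_mem hu) hu |>.2 hz, ?_⟩, by group⟩
    simpa only [mul_inv_rev, mul_assoc] using hgz
  · rintro ⟨w, ⟨hw, hgw⟩, rfl⟩
    refine ⟨mul_mul_mem_iff hu (H.inv_mem hu) |>.2 hw, ?_⟩
    simpa only [mul_inv_rev, mul_assoc, inv_mul_cancel_left] using hgw

theorem mul_mul_eq_image (g : G) {u v : G} (hu : u ∈ H) (hv : v ∈ H) :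
    Zset H (u * g * v) = (fun z => u * z * u⁻¹) '' Zset H g := by
  rw [mul_right_eq _ hv, mul_left_eq_image _ hu]

/-- `Z_{h₁th₂}(H)` is the `h₁`-conjugate of `Z_t(H)`, and `h₁th₂ ∉ H` iff `t ∉ H`. -/
theorem iUnion_diff_of_eq_iUnion_doubleCoset {S T : Set G}
    (hS : S = ⋃ t ∈ T, {x : G | ∃ h₁ ∈ H, ∃ h₂ ∈ H, x = h₁ * t * h₂}) :
    ⋃ g ∈ S \ (H : Set G), Zset H g =
      ⋃ t ∈ T \ (H : Set G), ⋃ h ∈ (H : Set G), (fun z => h * z * h⁻¹) '' Zset H t := by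
  subst hS
  ext x
  simp only [Set.mem_iUnion, Set.mem_sdiff, Set.mem_ofPred_eq, SetLike.mem_coe, exists_prop]
  constructor
  · rintro ⟨_, ⟨⟨t, ht, h₁, hh₁, h₂, hh₂, rfl⟩, hgH⟩, hx⟩
    refine ⟨t, ⟨ht, fun htH => hgH (mul_mul_mem_iff hh₁ hh₂ |>.2 htH)⟩, h₁, hh₁, ?_⟩
    rwa [← mul_mul_eq_image t hh₁ hh₂]
  · rintro ⟨t, ⟨ht, htH⟩, h, hh, hx⟩
    refine ⟨h * t * h⁻¹, ⟨⟨t, ht, h, hh, h⁻¹, H.inv_mem hh, rfl⟩, ?_⟩, ?_⟩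
    · rwa [mul_mul_mem_iff hh (H.inv_mem hh)]
    · rwa [mul_mul_eq_image t hh (H.inv_mem hh)]

end Zset

/-- (a) `Z_{ugv}(H) = u·Z_g(H)·u⁻¹` for `u, v ∈ H`; (b) if `T` is a set of double coset
representatives of `H` in `N*_G(H)`, then
`Z_G(H) = ⋃_{t ∈ T ∖ H} ⋃_{h ∈ H} h·Z_t(H)·h⁻¹`. -/
theorem Zset_conj_and_union {G : Type*} [Group G] (H : Subgroup G) :
    (∀ g : G, ∀ u ∈ H, ∀ v ∈ H,
      Zset H (u * g * v) = (fun z => u * z * u⁻¹) '' Zset H g) ∧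
    (∀ T : Set G,
      genNormalizer H = ⋃ t ∈ T, {x : G | ∃ h₁ ∈ H, ∃ h₂ ∈ H, x = h₁ * t * h₂} →
      ZsetG H = ⋃ t ∈ T \ (H : Set G), ⋃ h ∈ (H : Set G),
        (fun z => h * z * h⁻¹) '' Zset H t) :=
  ⟨fun g _ hu _ hv => Zset.mul_mul_eq_image g hu hv,
    fun _ hT => Zset.iUnion_diff_of_eq_iUnion_doubleCoset hT⟩
end

section
/- Let p ≥ 2 be an integer and let G be the group with presentation G = ⟨a, b, a', b' | a = b'⁻¹ a' b', b⁻¹ a b = (a')^p⟩. Then for every natural number n, (b b')⁻ⁿ · a · (b b')ⁿ = a^{pⁿ} in G. -/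
/-!
Conjugation by `b b'` acts on `a` as `a ↦ b'⁻¹ (b⁻¹ a b) b' = b'⁻¹ a'^p b' = (b'⁻¹ a' b')^p = a^p`,
so `a` and `t = b b'` satisfy the Baumslag–Solitar relation `t⁻¹ a t = a^p`, which iterates to
`t⁻ⁿ a tⁿ = a^(pⁿ)` in any group.
-/

/-- Relators for `G = ⟨a, b, a', b' ∣ a = b'⁻¹ a' b', b⁻¹ a b = (a')^p⟩`, with the generators
`a, b, a', b'` indexed by `0, 1, 2, 3 : Fin 4`. -/
def amalgRels (p : ℕ) : Set (FreeGroup (Fin 4)) :=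
  { (FreeGroup.of 0)⁻¹ * ((FreeGroup.of 3)⁻¹ * FreeGroup.of 2 * FreeGroup.of 3),
    ((FreeGroup.of 1)⁻¹ * FreeGroup.of 0 * FreeGroup.of 1)⁻¹ * (FreeGroup.of 2) ^ p }

section ConjPow

variable {G : Type*} [Group G]

theorem inv_mul_pow_mul (g a : G) (k : ℕ) : (g⁻¹ * a * g) ^ k = g⁻¹ * a ^ k * g := by
  simpa using conj_pow (a := g⁻¹) (b := a) (i := k)

theorem inv_pow_mul_mul_pow_of_inv_mul_mul_eq_pow {g a : G} {p : ℕ}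
    (h : g⁻¹ * a * g = a ^ p) (n : ℕ) : (g ^ n)⁻¹ * a * g ^ n = a ^ p ^ n := by
  induction n with
  | zero => simp
  | succ n ih =>
    calc (g ^ (n + 1))⁻¹ * a * g ^ (n + 1) = (g ^ n)⁻¹ * (g⁻¹ * a * g) * g ^ n := by group
      _ = ((g ^ n)⁻¹ * a * g ^ n) ^ p := by rw [h, inv_mul_pow_mul]
      _ = a ^ p ^ (n + 1) := by rw [ih, ← pow_mul, pow_succ]

end ConjPow

namespace amalgRels

open PresentedGroup

theorem of_zero_eq (p : ℕ) : (of 0 : PresentedGroup (amalgRels p)) = (of 3)⁻¹ * of 2 * of 3 := by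
  have h := mk_eq_mk_of_inv_mul_mem (rels := amalgRels p) (Or.inl rfl)
  simp only [map_mul, map_inv] at h
  exact h

theorem inv_of_one_mul_of_zero_mul_of_one (p : ℕ) :
    (of 1 : PresentedGroup (amalgRels p))⁻¹ * of 0 * of 1 = of 2 ^ p := by
  have h := mk_eq_mk_of_inv_mul_mem (rels := amalgRels p) (Or.inr rfl)
  simp only [map_mul, map_inv, map_pow] at h
  exact h

theorem conj_of_zero (p : ℕ) :
    ((of 1 : PresentedGroup (amalgRels p)) * of 3)⁻¹ * of 0 * (of 1 * of 3) = of 0 ^ p := by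
  calc ((of 1 : PresentedGroup (amalgRels p)) * of 3)⁻¹ * of 0 * (of 1 * of 3)
      = (of 3)⁻¹ * ((of 1)⁻¹ * of 0 * of 1) * of 3 := by group
    _ = ((of 3)⁻¹ * of 2 * of 3) ^ p := by
      rw [inv_of_one_mul_of_zero_mul_of_one, inv_mul_pow_mul]
    _ = of 0 ^ p := by rw [← of_zero_eq]

end amalgRels

theorem conj_pow_presented_general (p : ℕ) (n : ℕ) :
    (((PresentedGroup.of 1 : PresentedGroup (amalgRels p)) * PresentedGroup.of 3) ^ n)⁻¹ *
        PresentedGroup.of 0 *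
        ((PresentedGroup.of 1 : PresentedGroup (amalgRels p)) * PresentedGroup.of 3) ^ n =
      (PresentedGroup.of 0 : PresentedGroup (amalgRels p)) ^ (p ^ n) :=
  inv_pow_mul_mul_pow_of_inv_mul_mul_eq_pow (amalgRels.conj_of_zero p) n

/-- In `G = ⟨a, b, a', b' ∣ a = b'⁻¹ a' b', b⁻¹ a b = (a')^p⟩` (with `p ≥ 2`), for every `n`
one has `(b b')⁻ⁿ · a · (b b')ⁿ = a^(pⁿ)`. -/
theorem conj_pow_presented (p : ℕ) (hp : 2 ≤ p) (n : ℕ) :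
    (((PresentedGroup.of 1 : PresentedGroup (amalgRels p)) * PresentedGroup.of 3) ^ n)⁻¹ *
        PresentedGroup.of 0 *
        ((PresentedGroup.of 1 : PresentedGroup (amalgRels p)) * PresentedGroup.of 3) ^ n =
      (PresentedGroup.of 0 : PresentedGroup (amalgRels p)) ^ (p ^ n) :=
  conj_pow_presented_general p n
end
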